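/- arXiv:2604.03680 — 10 statements merged into one kernel-verified Lean document; each statement's English description precedes it below -/
import Mathlib

section
/- Let n ≥ 1, let (a,b) ⊆ ℝ be a (finite or infinite) open interval, and let G and Q be monic real polynomials of degree n+1 whose zeros are all real, simple and lie in (a,b). Denote the zeros of G by x_1 < x_2 < ⋯ < x_{n+1} and the zeros of Q by y_1 < ⋯ < y_{n+1}, and suppose Q ≺ G, i.e. y_1 < x_1 < y_2 < x_2 < ⋯ < y_{n+1} < x_{n+1}. Let P be a monic real polynomial of degree n with all zeros real, let E ∈ ℝ, and let A, B : (a,b) → ℝ be continuous functions with A(x) > 0 for all x ∈ (a,b), such that A(x)P(x) = B(x)G(x) + (x−E)Q(x) for all x ∈ (a,b). Assume that B(E) ≠ 0 whenever E ∈ (a,b), and that G and P have no common zero. Then: (i) E < x_{n+1}; (ii) writing z_1 < z_2 < ⋯ < z_{n+1} for the ascending arrangement of E together with the n zeros of P, one has z_1 < x_1 < z_2 < x_2 < ⋯ < z_{n+1} < x_{n+1}, i.e. (x−E)P(x) ≺ G(x); (iii) the zeros t_1 < ⋯ < t_n of P satisfy x_1 < t_1 < x_2 < t_2 < ⋯ <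 t_n < x_{n+1} (i.e. G ≺ P) if and only if E < x_1. -/
open Polynomial


lemma aux_parity {r : ℝ} {m k : ℕ} (h1 : 0 < (-1:ℝ)^m * r) (h2 : 0 < (-1:ℝ)^k * r) :
    m % 2 = k % 2 := by
  rcases Nat.even_or_odd m with hm | hm <;> rcases Nat.even_or_odd k with hk | hk
  · rw [Nat.even_iff.1 hm, Nat.even_iff.1 hk]
  · rw [hm.neg_one_pow, one_mul] at h1; rw [hk.neg_one_pow, neg_one_mul] at h2; linarith
  · rw [hk.neg_one_pow, one_mul] at h2; rw [hm.neg_one_pow, neg_one_mul] at h1; linarith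
  · rw [Nat.odd_iff.1 hm, Nat.odd_iff.1 hk]

lemma aux_sign (t : ℝ) (S : Multiset ℝ) (h : ∀ r ∈ S, r ≠ t) :
    0 < (-1 : ℝ)^(Multiset.card (S.filter (fun r => t < r))) * (S.map (fun r => t - r)).prod := by
  induction S using Multiset.induction_on with
  | empty => simp
  | cons r S ih =>
    have hr : r ≠ t := h r (Multiset.mem_cons_self r S)
    have ih' := ih (fun s hs => h s (Multiset.mem_cons_of_mem hs))
    rcases lt_or_gt_of_ne hr with hlt | hgt
    · rw [Multiset.filter_cons_of_neg _ (by simpa using hlt.le), Multiset.map_cons,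
        Multiset.prod_cons, mul_left_comm]
      exact mul_pos (by linarith) ih'
    · rw [Multiset.filter_cons_of_pos _ (show t < r from hgt), Multiset.map_cons, Multiset.prod_cons,
        Multiset.card_cons, pow_succ]
      have h2 : (0:ℝ) < t - r → False := by intro; linarith
      have := mul_pos (show (0:ℝ) < r - t by linarith) ih'
      nlinarith [this]

lemma aux_eval_prod {p : Polynomial ℝ} (hm : p.Monic) (hc : Multiset.card p.roots = p.natDegree)
    (t : ℝ) : p.eval t = (p.roots.map (fun r => t - r)).prod := by
  conv_lhs => rw [← prod_multiset_X_sub_C_of_monic_of_roots_card_eq hm hc]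
  rw [eval_multiset_prod, Multiset.map_map]
  simp [Function.comp]

lemma aux_sign_poly {p : Polynomial ℝ} (hm : p.Monic) (hc : Multiset.card p.roots = p.natDegree)
    {t : ℝ} (ht : p.eval t ≠ 0) :
    0 < (-1 : ℝ)^(Multiset.card (p.roots.filter (fun r => t < r))) * p.eval t := by
  rw [aux_eval_prod hm hc]
  refine aux_sign t p.roots (fun r hr hrt => ht ?_)
  subst hrt
  exact (mem_roots hm.ne_zero).1 hr

/-- Theorem 2.1(1) — mixed recurrence with `Q ≺ G` (equal degree `n+1`),
`A(x)P(x) = B(x)G(x) + (x−E)Q(x)` on the open interval `(a,b)` (endpoints possibly infinite,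
hence `EReal`). Zeros are indexed `0,…,n` in ascending order. -/
theorem stmt_0 (n : ℕ) (hn : 1 ≤ n) (a b : EReal)
    (G Q P : Polynomial ℝ) (E : ℝ) (A B : ℝ → ℝ)
    (x y : ℕ → ℝ)
    (hGmonic : G.Monic) (hGdeg : G.natDegree = n + 1)
    (hQmonic : Q.Monic) (hQdeg : Q.natDegree = n + 1)
    (hPmonic : P.Monic) (hPdeg : P.natDegree = n)
    (hPreal : P.roots.card = n)
    (hx : ∀ i j : ℕ, i < j → j ≤ n → x i < x j)
    (hy : ∀ i j : ℕ, i < j → j ≤ n → y i < y j)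
    (hGroots : ∀ r : ℝ, G.eval r = 0 ↔ ∃ i ≤ n, x i = r)
    (hQroots : ∀ r : ℝ, Q.eval r = 0 ↔ ∃ i ≤ n, y i = r)
    (hxab : ∀ i ≤ n, a < (x i : EReal) ∧ (x i : EReal) < b)
    (hyab : ∀ i ≤ n, a < (y i : EReal) ∧ (y i : EReal) < b)
    (hQG1 : ∀ i ≤ n, y i < x i)
    (hQG2 : ∀ i < n, x i < y (i + 1))
    (hA : ContinuousOn A {t : ℝ | a < (t : EReal) ∧ (t : EReal) < b})
    (hB : ContinuousOn B {t : ℝ | a < (t : EReal) ∧ (t : EReal) < b})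
    (hApos : ∀ t : ℝ, a < (t : EReal) → (t : EReal) < b → 0 < A t)
    (hrel : ∀ t : ℝ, a < (t : EReal) → (t : EReal) < b →
        A t * P.eval t = B t * G.eval t + (t - E) * Q.eval t)
    (hBE : (a < (E : EReal) ∧ (E : EReal) < b) → B E ≠ 0)
    (hcommon : ∀ r : ℝ, ¬(G.eval r = 0 ∧ P.eval r = 0)) :
    E < x n ∧
    (∃ z : ℕ → ℝ, (∀ i j : ℕ, i < j → j ≤ n → z i < z j) ∧
      (∀ r : ℝ, (r = E ∨ P.eval r = 0) ↔ ∃ i ≤ n, z i = r) ∧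
      (∀ i ≤ n, z i < x i) ∧ (∀ i < n, x i < z (i + 1))) ∧
    ((∃ t : ℕ → ℝ, (∀ i j : ℕ, i < j → j < n → t i < t j) ∧
      (∀ r : ℝ, P.eval r = 0 ↔ ∃ i < n, t i = r) ∧
      (∀ i < n, x i < t i ∧ t i < x (i + 1))) ↔ E < x 0) := by
  have hP0 : P ≠ 0 := hPmonic.ne_zero
  have hQ0 : Q ≠ 0 := hQmonic.ne_zero
  -- weak monotonicity of x
  have hxle : ∀ i j : ℕ, i ≤ j → j ≤ n → x i ≤ x j := by
    intro i j hij hj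
    rcases eq_or_lt_of_le hij with rfl | h
    · exact le_refl _
    · exact (hx i j h hj).le
  have hyle : ∀ i j : ℕ, i ≤ j → j ≤ n → y i ≤ y j := by
    intro i j hij hj
    rcases eq_or_lt_of_le hij with rfl | h
    · exact le_refl _
    · exact (hy i j h hj).le
  -- basic facts at the zeros x i
  have hGx : ∀ i ≤ n, G.eval (x i) = 0 := fun i hi => (hGroots _).mpr ⟨i, hi, rfl⟩
  have hPx : ∀ i ≤ n, P.eval (x i) ≠ 0 := fun i hi h => hcommon _ ⟨hGx i hi, h⟩
  have hApx : ∀ i ≤ n, 0 < A (x i) := fun i hi => hApos _ (hxab i hi).1 (hxab i hi).2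
  have hrelx : ∀ i ≤ n, A (x i) * P.eval (x i) = (x i - E) * Q.eval (x i) := by
    intro i hi
    rw [hrel _ (hxab i hi).1 (hxab i hi).2, hGx i hi]; ring
  have hxE : ∀ i ≤ n, x i ≠ E := by
    intro i hi h
    have h1 := hrelx i hi
    rw [show x i - E = 0 by rw [h, sub_self], zero_mul] at h1
    exact hPx i hi ((mul_eq_zero.1 h1).resolve_left (ne_of_gt (hApx i hi)))
  -- Q's root multiset is exactly {y 0, …, y n}
  have hyinj : ∀ i ∈ Multiset.range (n+1), ∀ j ∈ Multiset.range (n+1), y i = y j → i = j := by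
    intro i hi j hj hij
    simp only [Multiset.mem_range] at hi hj
    by_contra hne
    rcases Nat.lt_or_ge i j with h | h
    · exact absurd hij (ne_of_lt (hy i j h (by omega)))
    · have : j < i := by omega
      exact absurd hij.symm (ne_of_lt (hy j i this (by omega)))
  have hQroots' : Q.roots = (Multiset.range (n+1)).map y := by
    refine (Multiset.eq_of_le_of_card_le ?_ ?_).symm
    · refine (Multiset.le_iff_subset ((Multiset.nodup_range _).map_on hyinj)).2 ?_
      intro r hr
      rw [Multiset.mem_map] at hr
      obtain ⟨i, hi, rfl⟩ := hr
      rw [Multiset.mem_range] at hi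
      exact (mem_roots hQ0).2 ((hQroots _).mpr ⟨i, by omega, rfl⟩)
    · calc Multiset.card Q.roots ≤ Q.natDegree := Q.card_roots'
        _ = Multiset.card ((Multiset.range (n+1)).map y) := by
            rw [Multiset.card_map, Multiset.card_range, hQdeg]
  have hQcard : Multiset.card Q.roots = Q.natDegree := by
    rw [hQroots', Multiset.card_map, Multiset.card_range, hQdeg]
  -- comparing x k with y i
  have hyx : ∀ k ≤ n, ∀ i ≤ n, x k < y i ↔ k + 1 ≤ i := by
    intro k hk i hi
    constructor
    · intro h
      by_contra hc
      have h1 : y i ≤ y k := hyle i k (by omega) hk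
      have := hQG1 k hk
      linarith
    · intro h
      have h1 : x k < y (k+1) := hQG2 k (by omega)
      have h2 : y (k+1) ≤ y i := hyle (k+1) i h hi
      linarith
  -- number of Q-roots above x k
  have hQfil : ∀ k ≤ n, Multiset.card (Q.roots.filter (fun r => x k < r)) = n - k := by
    intro k hk
    rw [hQroots', Multiset.filter_map, Multiset.card_map]
    have h2 : Multiset.filter ((fun r => x k < r) ∘ y) (Multiset.range (n+1))
        = Multiset.filter (fun i => k + 1 ≤ i) (Multiset.range (n+1)) := by
      apply Multiset.filter_congr
      intro i hi
      rw [Multiset.mem_range] at hi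
      exact hyx k hk i (by omega)
    rw [h2]
    have h3 : Multiset.filter (fun i => k + 1 ≤ i) (Multiset.range (n+1))
        = ((Finset.range (n+1)).filter (fun i => k + 1 ≤ i)).val := by
      rw [Finset.filter_val, Finset.range_val]
    have h4 : (Finset.range (n+1)).filter (fun i => k + 1 ≤ i) = Finset.Ico (k+1) (n+1) := by
      ext i
      simp [Finset.mem_filter, Finset.mem_range, Finset.mem_Ico]
      omega
    rw [h3, h4, ← Finset.card_def, Nat.card_Ico]
    omega
  -- sign of Q at x k
  have hQsign : ∀ k ≤ n, 0 < (-1:ℝ)^(n-k) * Q.eval (x k) := by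
    intro k hk
    have hne : Q.eval (x k) ≠ 0 := by
      intro h
      obtain ⟨i, hi, hyi⟩ := (hQroots _).1 h
      rcases Nat.lt_or_ge i (k+1) with h' | h'
      · have h1 : y i ≤ y k := hyle i k (by omega) hk
        have := hQG1 k hk
        linarith
      · have := (hyx k hk i hi).2 h'
        linarith
    have := aux_sign_poly hQmonic hQcard hne
    rwa [hQfil k hk] at this
  -- the polynomial R = (X - E) * P
  set R : Polynomial ℝ := (X - C E) * P with hRdef
  have hRmonic : R.Monic := (monic_X_sub_C E).mul hPmonic
  have hR0 : R ≠ 0 := hRmonic.ne_zero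
  have hRdeg : R.natDegree = n + 1 := by
    rw [hRdef, (monic_X_sub_C E).natDegree_mul hPmonic, natDegree_X_sub_C, hPdeg]
    omega
  have hRroots : R.roots = E ::ₘ P.roots := by
    rw [hRdef, roots_mul (mul_ne_zero (X_sub_C_ne_zero E) hP0), roots_X_sub_C,
      Multiset.singleton_add]
  have hRcard : Multiset.card R.roots = R.natDegree := by
    rw [hRroots, Multiset.card_cons, hPreal, hRdeg]
  have hReval : ∀ t : ℝ, R.eval t = (t - E) * P.eval t := by
    intro t; rw [hRdef]; simp
  have hRx : ∀ i ≤ n, R.eval (x i) ≠ 0 := by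
    intro i hi
    rw [hReval]
    exact mul_ne_zero (sub_ne_zero.2 (hxE i hi)) (hPx i hi)
  -- sign of R at x i
  have hRsign : ∀ i ≤ n, 0 < (-1:ℝ)^(n-i) * R.eval (x i) := by
    intro i hi
    have hq := hQsign i hi
    have h2 : 0 < (x i - E)^2 := pow_two_pos_of_ne_zero (sub_ne_zero.2 (hxE i hi))
    have ha := hApx i hi
    have hrel2 : A (x i) * R.eval (x i) = (x i - E)^2 * Q.eval (x i) := by
      rw [hReval]
      calc A (x i) * ((x i - E) * P.eval (x i)) = (x i - E) * (A (x i) * P.eval (x i)) := by ring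
        _ = (x i - E) * ((x i - E) * Q.eval (x i)) := by rw [hrelx i hi]
        _ = (x i - E)^2 * Q.eval (x i) := by ring
    by_contra hcon
    push_neg at hcon
    have h3 : A (x i) * ((-1:ℝ)^(n-i) * R.eval (x i)) ≤ 0 :=
      mul_nonpos_of_nonneg_of_nonpos ha.le hcon
    have h4 : A (x i) * ((-1:ℝ)^(n-i) * R.eval (x i))
        = (x i - E)^2 * ((-1:ℝ)^(n-i) * Q.eval (x i)) := by
      rw [mul_left_comm, hrel2, mul_left_comm]
    have h5 := mul_pos h2 hq
    rw [h4] at h3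
    linarith
  -- counting function
  set c : ℕ → ℕ := fun i => Multiset.card (R.roots.filter (fun r => x i < r)) with hcdef
  have hcsign : ∀ i ≤ n, 0 < (-1:ℝ)^(c i) * R.eval (x i) :=
    fun i hi => aux_sign_poly hRmonic hRcard (hRx i hi)
  have hcpar : ∀ i ≤ n, c i % 2 = (n - i) % 2 :=
    fun i hi => aux_parity (hcsign i hi) (hRsign i hi)
  have hcmono : ∀ i < n, c (i+1) ≤ c i := by
    intro i hi
    apply Multiset.card_le_card
    apply Multiset.monotone_filter_right
    intro r hr
    exact (hx i (i+1) (by omega) (by omega)).trans hr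
  have hctop : c 0 ≤ n + 1 := by
    calc c 0 ≤ Multiset.card R.roots := Multiset.card_le_card (Multiset.filter_le _ _)
      _ = n + 1 := by rw [hRcard, hRdeg]
  have hkey : ∀ d i : ℕ, i + d ≤ n → c (i + d) + d ≤ c i := by
    intro d
    induction d with
    | zero => intro i _; simp
    | succ d ih =>
      intro i hi
      have h1 := ih (i+1) (by omega)
      have h2 := hcmono i (by omega)
      have p1 := hcpar i (by omega)
      have p2 := hcpar (i+1) (by omega)
      have heq : i + (d+1) = (i+1) + d := by omega
      rw [heq]
      omega
  have hcn : c n = 0 := by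
    have h1 : c n + n ≤ c 0 := by
      have h := hkey n 0 (by omega)
      simpa using h
    have h2 := hcpar n le_rfl
    omega
  have hcval : ∀ i ≤ n, c i = n - i := by
    intro i hi
    have h1 : c i + i ≤ c 0 := by
      have h := hkey i 0 (by omega)
      simpa using h
    have h2 : c n + (n - i) ≤ c i := by
      have h := hkey (n-i) i (by omega)
      rwa [show i + (n-i) = n by omega] at h
    have h0 := hcpar 0 (by omega)
    omega
  -- x i is never a root of R
  have hxnotmem : ∀ i ≤ n, x i ∉ R.roots := by
    intro i hi hmem
    exact hRx i hi ((mem_roots hR0).1 hmem)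
  -- no root of R lies above x n
  have hno : ∀ r ∈ R.roots, ¬ x n < r := by
    intro r hr h
    have h1 : c n = 0 := hcn
    simp only [hcdef] at h1
    have h2 := Multiset.card_eq_zero.1 h1
    have : r ∈ R.roots.filter (fun s => x n < s) := Multiset.mem_filter.2 ⟨hr, h⟩
    rw [h2] at this
    exact Multiset.notMem_zero r this
  -- exactly one root below x 0
  have hint0 : Multiset.card (R.roots.filter (fun r => r < x 0)) = 1 := by
    have hsplit := Multiset.filter_add_not (fun r => r < x 0) R.roots
    have hcongr : R.roots.filter (fun r => ¬ r < x 0) = R.roots.filter (fun r => x 0 < r) := by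
      apply Multiset.filter_congr
      intro r hr
      constructor
      · intro h
        rcases lt_or_eq_of_le (not_lt.1 h) with h' | h'
        · exact h'
        · exact absurd hr (h' ▸ hxnotmem 0 (by omega))
      · intro h; exact not_lt.2 h.le
    have hcards := congrArg Multiset.card hsplit
    rw [Multiset.card_add, hcongr] at hcards
    have h1 : Multiset.card (R.roots.filter (fun r => x 0 < r)) = n := by
      have := hcval 0 (by omega)
      simp only [hcdef] at this
      omega
    rw [hRcard, hRdeg] at hcards
    omega
  -- exactly one root in each interval (x i, x (i+1))
  have hint : ∀ i < n, Multiset.card (R.roots.filter (fun r => r < x (i+1) ∧ x i < r)) = 1 := by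
    intro i hi
    have hsplit := Multiset.filter_add_not (fun r => r < x (i+1)) (R.roots.filter (fun r => x i < r))
    have e1 : Multiset.filter (fun r => r < x (i+1)) (R.roots.filter (fun r => x i < r))
        = R.roots.filter (fun r => r < x (i+1) ∧ x i < r) := Multiset.filter_filter _ _ _
    have e2 : Multiset.filter (fun r => ¬ r < x (i+1)) (R.roots.filter (fun r => x i < r))
        = R.roots.filter (fun r => x (i+1) < r) := by
      rw [Multiset.filter_filter]
      apply Multiset.filter_congr
      intro r hr
      constructor
      · rintro ⟨h1, h2⟩
        rcases lt_or_eq_of_le (not_lt.1 h1) with h' | h'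
        · exact h'
        · exact absurd hr (h' ▸ hxnotmem (i+1) (by omega))
      · intro h
        exact ⟨not_lt.2 h.le, (hx i (i+1) (by omega) (by omega)).trans h⟩
    have hcards := congrArg Multiset.card hsplit
    rw [Multiset.card_add, e1, e2] at hcards
    have h1 : Multiset.card (R.roots.filter (fun r => x i < r)) = n - i := by
      have h := hcval i (by omega); simp only [hcdef] at h; exact h
    have h2 : Multiset.card (R.roots.filter (fun r => x (i+1) < r)) = n - (i+1) := by
      have h := hcval (i+1) (by omega); simp only [hcdef] at h; exact h
    omega
  -- choose the roots
  obtain ⟨w0, hw0⟩ := Multiset.card_eq_one.1 hint0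
  have hwi : ∀ i, i < n → ∃ w, R.roots.filter (fun r => r < x (i+1) ∧ x i < r) = {w} :=
    fun i hi => Multiset.card_eq_one.1 (hint i hi)
  choose w hw using hwi
  set z : ℕ → ℝ := fun i => match i with
    | 0 => w0
    | Nat.succ j => if h : j < n then w j h else 0 with hzdef
  have hz0 : z 0 = w0 := rfl
  have hzs : ∀ j (h : j < n), z (j+1) = w j h := by
    intro j h
    simp only [hzdef, dif_pos h]
  -- membership facts for z
  have hz0mem : z 0 ∈ R.roots ∧ z 0 < x 0 := by
    have h1 : z 0 ∈ R.roots.filter (fun r => r < x 0) := by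
      rw [hw0, hz0]; exact Multiset.mem_singleton_self w0
    exact ⟨(Multiset.mem_filter.1 h1).1, (Multiset.mem_filter.1 h1).2⟩
  have hzsmem : ∀ i, (h : i < n) → z (i+1) ∈ R.roots ∧ z (i+1) < x (i+1) ∧ x i < z (i+1) := by
    intro i h
    have h1 : z (i+1) ∈ R.roots.filter (fun r => r < x (i+1) ∧ x i < r) := by
      rw [hw i h, hzs i h]; exact Multiset.mem_singleton_self _
    obtain ⟨hm, hlt⟩ := Multiset.mem_filter.1 h1
    exact ⟨hm, hlt.1, hlt.2⟩
  have hzlt : ∀ i ≤ n, z i < x i := by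
    intro i hi
    cases i with
    | zero => exact hz0mem.2
    | succ j => exact (hzsmem j (by omega)).2.1
  have hzgt : ∀ i < n, x i < z (i + 1) := fun i hi => (hzsmem i hi).2.2
  have hzmem : ∀ i ≤ n, z i ∈ R.roots := by
    intro i hi
    cases i with
    | zero => exact hz0mem.1
    | succ j => exact (hzsmem j (by omega)).1
  have hzmono : ∀ i j : ℕ, i < j → j ≤ n → z i < z j := by
    intro i j hij hj
    obtain ⟨m, rfl⟩ : ∃ m, j = m + 1 := ⟨j-1, by omega⟩
    calc z i < x i := hzlt i (by omega)
      _ ≤ x m := hxle i m (by omega) (by omega)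
      _ < z (m+1) := hzgt m (by omega)
  -- characterization of roots of R
  have hmem_iff : ∀ r : ℝ, r ∈ R.roots ↔ (r = E ∨ P.eval r = 0) := by
    intro r
    rw [mem_roots hR0]
    have h1 : R.IsRoot r ↔ (r - E) * P.eval r = 0 := by
      rw [IsRoot.def, hReval]
    rw [h1, mul_eq_zero, sub_eq_zero]
  -- every root of R is one of the z i
  have hforward : ∀ r ∈ R.roots, ∃ i ≤ n, z i = r := by
    intro r hr
    have hrne : ∀ i ≤ n, r ≠ x i := fun i hi h => hxnotmem i hi (h ▸ hr)
    have hrn : r < x n := lt_of_le_of_ne (not_lt.1 (hno r hr)) (hrne n le_rfl)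
    have hex2 : ∃ i, r < x i := ⟨n, hrn⟩
    have hkspec : r < x (Nat.find hex2) := Nat.find_spec hex2
    have hkle : Nat.find hex2 ≤ n := Nat.find_le hrn
    rcases hk : Nat.find hex2 with _ | j
    · refine ⟨0, by omega, ?_⟩
      rw [hk] at hkspec
      have hmem : r ∈ R.roots.filter (fun s => s < x 0) :=
        Multiset.mem_filter.2 ⟨hr, hkspec⟩
      rw [hw0] at hmem
      rw [hz0]
      exact (Multiset.mem_singleton.1 hmem).symm
    · rw [hk] at hkspec hkle
      have hj : j < n := by omega
      have hkm : ¬ r < x j := Nat.find_min hex2 (by omega)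
      have hgt : x j < r := lt_of_le_of_ne (not_lt.1 hkm) (Ne.symm (hrne j (by omega)))
      refine ⟨j+1, hkle, ?_⟩
      have hmem : r ∈ R.roots.filter (fun s => s < x (j+1) ∧ x j < s) :=
        Multiset.mem_filter.2 ⟨hr, hkspec, hgt⟩
      rw [hw j hj] at hmem
      rw [hzs j hj]
      exact (Multiset.mem_singleton.1 hmem).symm
  -- the z i enumerate exactly E and the roots of P
  have hmemall : ∀ r : ℝ, (r = E ∨ P.eval r = 0) ↔ ∃ i ≤ n, z i = r := by
    intro r
    rw [← hmem_iff]
    constructor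
    · exact hforward r
    · rintro ⟨i, hi, rfl⟩; exact hzmem i hi
  have hEroot : E ∈ R.roots := (hmem_iff E).2 (Or.inl rfl)
  obtain ⟨iE, hiE, hziE⟩ := hforward E hEroot
  have hExn : E < x n := by
    rw [← hziE]
    calc z iE < x iE := hzlt iE hiE
      _ ≤ x n := hxle iE n hiE le_rfl
  refine ⟨hExn, ⟨z, hzmono, hmemall, hzlt, hzgt⟩, ?_, ?_⟩
  · rintro ⟨t, tmono, troots, tint⟩
    cases iE with
    | zero =>
      rw [← hziE]
      exact hzlt 0 (by omega)
    | succ j =>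
      exfalso
      have h1 : z 0 < E := hziE ▸ hzmono 0 (j+1) (by omega) hiE
      have h2 : z 0 = E ∨ P.eval (z 0) = 0 := (hmem_iff _).1 (hzmem 0 (by omega))
      have h3 : P.eval (z 0) = 0 := h2.resolve_left (ne_of_lt h1)
      obtain ⟨m, hm, hmz⟩ := (troots (z 0)).1 h3
      have h4 : x m < t m := (tint m hm).1
      have h5 : x 0 ≤ x m := hxle 0 m (by omega) (by omega)
      have h6 : z 0 < x 0 := hzlt 0 (by omega)
      rw [hmz] at h4
      linarith
  · intro hE0
    -- E is below all zeros of G; first, E is not a root of P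
    have hPE : P.eval E ≠ 0 := by
      intro h
      have hEc : 2 ≤ Multiset.count E R.roots := by
        rw [hRroots, Multiset.count_cons_self]
        have hmem : E ∈ P.roots := (mem_roots hP0).2 h
        have := Multiset.one_le_count_iff_mem.2 hmem
        omega
      have hcf : Multiset.count E (R.roots.filter (fun r => r < x 0))
          = Multiset.count E R.roots := by
        rw [Multiset.count_filter, if_pos hE0]
      have hle := Multiset.count_le_card E (R.roots.filter (fun r => r < x 0))
      rw [hcf] at hle
      omega
    -- E = z 0
    have hEz0 : z 0 = E := by
      cases iE with
      | zero => exact hziE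
      | succ j =>
        exfalso
        have h1 : x j < z (j+1) := hzgt j (by omega)
        have h2 : x 0 ≤ x j := hxle 0 j (by omega) (by omega)
        rw [hziE] at h1
        linarith
    refine ⟨fun i => z (i+1), ?_, ?_, ?_⟩
    · intro i j hij hj
      exact hzmono (i+1) (j+1) (by omega) (by omega)
    · intro r
      constructor
      · intro hr
        obtain ⟨i, hi, hzi⟩ := hforward r ((hmem_iff r).2 (Or.inr hr))
        cases i with
        | zero =>
          exfalso
          rw [hEz0] at hzi
          rw [← hzi] at hr
          exact hPE hr
        | succ j => exact ⟨j, by omega, hzi⟩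
      · rintro ⟨i, hi, rfl⟩
        have h2 := (hmem_iff _).1 (hzmem (i+1) (by omega))
        refine h2.resolve_left ?_
        have h3 : x i < z (i+1) := hzgt i hi
        have h4 : x 0 ≤ x i := hxle 0 i (by omega) (by omega)
        intro h
        rw [h] at h3
        linarith
    · intro i hi
      exact ⟨hzgt i hi, hzlt (i+1) (by omega)⟩
end

section
/- Let n ≥ 1, let (a,b) ⊆ ℝ be a (finite or infinite) open interval, and let G and Q be monic real polynomials of degree n+1 whose zeros are all real, simple and lie in (a,b). Denote the zeros of G by x_1 < x_2 < ⋯ < x_{n+1} and the zeros of Q by y_1 < ⋯ < y_{n+1}, and suppose G ≺ Q, i.e. x_1 < y_1 < x_2 < y_2 < ⋯ < x_{n+1} < y_{n+1}. Let P be a monic real polynomial of degree n with all zeros real, let E ∈ ℝ, and let A, B : (a,b) → ℝ be continuous functions with A(x) > 0 for all x ∈ (a,b), such that A(x)P(x) = B(x)G(x) + (x−E)Q(x) for all x ∈ (a,b). Assume that B(E) ≠ 0 whenever E ∈ (a,b), and that G and P have no common zero. Then: (i) E > x_1; (ii) writing z_1 < z_2 < ⋯ < z_{n+1} for the ascending arrangement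 of E together with the n zeros of P, one has x_1 < z_1 < x_2 < z_2 < ⋯ < x_{n+1} < z_{n+1}, i.e. G(x) ≺ (x−E)P(x); (iii) the zeros t_1 < ⋯ < t_n of P satisfy x_1 < t_1 < x_2 < t_2 < ⋯ < t_n < x_{n+1} (i.e. G ≺ P) if and only if E > x_{n+1}. -/
open Polynomial Finset

open Polynomial Finset

lemma my_prod_form (p : Polynomial ℝ) (m : ℕ) (hm : p.Monic) (hdeg : p.natDegree = m)
    (w : ℕ → ℝ) (hw : ∀ i j : ℕ, i < j → j < m → w i < w j)
    (hroots : ∀ i < m, p.eval (w i) = 0) :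
    ∀ t : ℝ, p.eval t = ∏ j ∈ Finset.range m, (t - w j) := by
  have hp0 : p ≠ 0 := hm.ne_zero
  have hinj : ∀ i ∈ Multiset.range m, ∀ j ∈ Multiset.range m, w i = w j → i = j := by
    intro i hi j hj hij
    simp only [Multiset.mem_range] at hi hj
    rcases lt_trichotomy i j with h | h | h
    · exact absurd hij (ne_of_lt (hw i j h hj))
    · exact h
    · exact absurd hij.symm (ne_of_lt (hw j i h hi))
  have hnd : ((Multiset.range m).map w).Nodup :=
    Multiset.Nodup.map_on hinj (Multiset.nodup_range m)
  have hle : (Multiset.range m).map w ≤ p.roots := by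
    rw [Multiset.le_iff_count]
    intro c
    by_cases hc : c ∈ (Multiset.range m).map w
    · have h1 : Multiset.count c ((Multiset.range m).map w) = 1 :=
        Multiset.count_eq_one_of_mem hnd hc
      have h2 : c ∈ p.roots := by
        rw [Polynomial.mem_roots hp0]
        obtain ⟨i, hi, rfl⟩ := Multiset.mem_map.1 hc
        exact hroots i (Multiset.mem_range.1 hi)
      rw [h1]
      exact Multiset.one_le_count_iff_mem.2 h2
    · simp [Multiset.count_eq_zero_of_notMem hc]
  have hcard : Multiset.card p.roots = p.natDegree := by
    have h1 : Multiset.card ((Multiset.range m).map w) = m := by simp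
    have h2 := Multiset.card_le_card hle
    have h3 := p.card_roots' 
    omega
  have heq : (Multiset.range m).map w = p.roots :=
    Multiset.eq_of_le_of_card_le hle (by simp [hcard, hdeg])
  have hpeq : p = (p.roots.map fun a => X - C a).prod := by
    have := Polynomial.C_leadingCoeff_mul_prod_multiset_X_sub_C (p := p) hcard
    rw [hm.leadingCoeff, map_one, one_mul] at this
    exact this.symm
  intro t
  conv_lhs => rw [hpeq]
  rw [← heq, Multiset.map_map, Polynomial.eval_multiset_prod]
  rw [← Finset.range_val, ← Multiset.map_map]
  simp [Finset.prod]
open Polynomial Finset Set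

lemma my_ivt (p : Polynomial ℝ) (u v : ℝ) (huv : u < v)
    (hsign : p.eval u * p.eval v < 0) :
    ∃ c : ℝ, u < c ∧ c < v ∧ p.eval c = 0 := by
  have hc : ContinuousOn (fun t => p.eval t) (Set.Icc u v) :=
    (Polynomial.continuous p).continuousOn
  rcases lt_or_ge (p.eval u) 0 with h | h
  · have hv : 0 < p.eval v := by nlinarith
    have := intermediate_value_Ioo huv.le hc (a := u) (b := v)
    obtain ⟨c, hc1, hc2⟩ := this (Set.mem_Ioo.2 ⟨h, hv⟩)
    exact ⟨c, hc1.1, hc1.2, hc2⟩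
  · have hu : 0 < p.eval u := by
      rcases h.lt_or_eq with h' | h'
      · exact h'
      · rw [← h'] at hsign; simp at hsign
    have hv : p.eval v < 0 := by nlinarith
    obtain ⟨c, hc1, hc2⟩ := intermediate_value_Ioo' huv.le hc (Set.mem_Ioo.2 ⟨hv, hu⟩)
    exact ⟨c, hc1.1, hc1.2, hc2⟩

lemma my_tail_root (p : Polynomial ℝ) (hm : p.Monic) (hdeg : 0 < p.natDegree) (u : ℝ)
    (hu : p.eval u < 0) : ∃ c : ℝ, u < c ∧ p.eval c = 0 := by
  have ht : Filter.Tendsto (fun t => p.eval t) Filter.atTop Filter.atTop :=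
    p.tendsto_atTop_of_leadingCoeff_nonneg
      (natDegree_pos_iff_degree_pos.1 hdeg) (by simp [hm.leadingCoeff])
  obtain ⟨v, hv⟩ := (ht.eventually_ge_atTop 1).and (Filter.eventually_ge_atTop (u+1)) |>.exists
  have huv : u < v := by linarith [hv.2]
  have : p.eval u * p.eval v < 0 := mul_neg_of_neg_of_pos hu (by linarith [hv.1])
  obtain ⟨c, h1, _, h3⟩ := my_ivt p u v huv this
  exact ⟨c, h1, h3⟩

/-- if a polynomial with `roots.card = m` has `k > m` listed distinct roots, contradiction;
    and with exactly m listed distinct roots, they are all the roots. -/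
lemma my_count_le (p : Polynomial ℝ) (hp : p ≠ 0) (k : ℕ) (r : ℕ → ℝ)
    (hr : ∀ i j : ℕ, i < j → j < k → r i < r j)
    (hroots : ∀ i < k, p.eval (r i) = 0) : k ≤ Multiset.card p.roots := by
  classical
  have hinj : Set.InjOn r (Finset.range k) := by
    intro i hi j hj hij
    simp only [Finset.coe_range, Set.mem_Iio] at hi hj
    rcases lt_trichotomy i j with h | h | h
    · exact absurd hij (ne_of_lt (hr i j h hj))
    · exact h
    · exact absurd hij.symm (ne_of_lt (hr j i h hi))
  have hsub : (Finset.range k).image r ⊆ p.roots.toFinset := by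
    intro c hc
    obtain ⟨i, hi, rfl⟩ := Finset.mem_image.1 hc
    simp only [Finset.mem_range] at hi
    rw [Multiset.mem_toFinset, Polynomial.mem_roots hp]
    exact hroots i hi
  calc k = ((Finset.range k).image r).card := by rw [Finset.card_image_of_injOn hinj, Finset.card_range]
    _ ≤ p.roots.toFinset.card := Finset.card_le_card hsub
    _ ≤ Multiset.card p.roots := Multiset.toFinset_card_le _

lemma my_count_all (p : Polynomial ℝ) (hp : p ≠ 0) (m : ℕ) (hcard : Multiset.card p.roots = m)
    (r : ℕ → ℝ) (hr : ∀ i j : ℕ, i < j → j < m → r i < r j)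
    (hroots : ∀ i < m, p.eval (r i) = 0) :
    ∀ s : ℝ, p.eval s = 0 → ∃ i < m, r i = s := by
  classical
  have hinj : Set.InjOn r (Finset.range m) := by
    intro i hi j hj hij
    simp only [Finset.coe_range, Set.mem_Iio] at hi hj
    rcases lt_trichotomy i j with h | h | h
    · exact absurd hij (ne_of_lt (hr i j h hj))
    · exact h
    · exact absurd hij.symm (ne_of_lt (hr j i h hi))
  have hsub : (Finset.range m).image r ⊆ p.roots.toFinset := by
    intro c hc
    obtain ⟨i, hi, rfl⟩ := Finset.mem_image.1 hc
    simp only [Finset.mem_range] at hi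
    rw [Multiset.mem_toFinset, Polynomial.mem_roots hp]
    exact hroots i hi
  have hcard2 : p.roots.toFinset.card ≤ ((Finset.range m).image r).card := by
    rw [Finset.card_image_of_injOn hinj, Finset.card_range]
    exact hcard ▸ Multiset.toFinset_card_le _
  have heq : (Finset.range m).image r = p.roots.toFinset :=
    Finset.eq_of_subset_of_card_le hsub hcard2
  intro s hs
  have : s ∈ p.roots.toFinset := by
    rw [Multiset.mem_toFinset, Polynomial.mem_roots hp]; exact hs
  rw [← heq] at this
  obtain ⟨i, hi, hri⟩ := Finset.mem_image.1 this
  exact ⟨i, Finset.mem_range.1 hi, hri⟩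


/-- Theorem 2.1(1) — mixed recurrence with `G ≺ Q` (equal degree `n+1`),
`A(x)P(x) = B(x)G(x) + (x−E)Q(x)` on the open interval `(a,b)` (endpoints possibly infinite,
hence `EReal`). Zeros are indexed `0,…,n` in ascending order. -/
theorem stmt_1 (n : ℕ) (hn : 1 ≤ n) (a b : EReal)
    (G Q P : Polynomial ℝ) (E : ℝ) (A B : ℝ → ℝ)
    (x y : ℕ → ℝ)
    (hGmonic : G.Monic) (hGdeg : G.natDegree = n + 1)
    (hQmonic : Q.Monic) (hQdeg : Q.natDegree = n + 1)
    (hPmonic : P.Monic) (hPdeg : P.natDegree = n)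
    (hPreal : P.roots.card = n)
    (hx : ∀ i j : ℕ, i < j → j ≤ n → x i < x j)
    (hy : ∀ i j : ℕ, i < j → j ≤ n → y i < y j)
    (hGroots : ∀ r : ℝ, G.eval r = 0 ↔ ∃ i ≤ n, x i = r)
    (hQroots : ∀ r : ℝ, Q.eval r = 0 ↔ ∃ i ≤ n, y i = r)
    (hxab : ∀ i ≤ n, a < (x i : EReal) ∧ (x i : EReal) < b)
    (hyab : ∀ i ≤ n, a < (y i : EReal) ∧ (y i : EReal) < b)
    (hGQ1 : ∀ i ≤ n, x i < y i)
    (hGQ2 : ∀ i < n, y i < x (i + 1))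
    (hA : ContinuousOn A {t : ℝ | a < (t : EReal) ∧ (t : EReal) < b})
    (hB : ContinuousOn B {t : ℝ | a < (t : EReal) ∧ (t : EReal) < b})
    (hApos : ∀ t : ℝ, a < (t : EReal) → (t : EReal) < b → 0 < A t)
    (hrel : ∀ t : ℝ, a < (t : EReal) → (t : EReal) < b →
        A t * P.eval t = B t * G.eval t + (t - E) * Q.eval t)
    (hBE : (a < (E : EReal) ∧ (E : EReal) < b) → B E ≠ 0)
    (hcommon : ∀ r : ℝ, ¬(G.eval r = 0 ∧ P.eval r = 0)) :
    x 0 < E ∧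
    (∃ z : ℕ → ℝ, (∀ i j : ℕ, i < j → j ≤ n → z i < z j) ∧
      (∀ r : ℝ, (r = E ∨ P.eval r = 0) ↔ ∃ i ≤ n, z i = r) ∧
      (∀ i ≤ n, x i < z i) ∧ (∀ i < n, z i < x (i + 1))) ∧
    ((∃ t : ℕ → ℝ, (∀ i j : ℕ, i < j → j < n → t i < t j) ∧
      (∀ r : ℝ, P.eval r = 0 ↔ ∃ i < n, t i = r) ∧
      (∀ i < n, x i < t i ∧ t i < x (i + 1))) ↔ x n < E) := by
  classical
  have hP0 : P ≠ 0 := hPmonic.ne_zero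
  have hxle : ∀ i j : ℕ, i ≤ j → j ≤ n → x i ≤ x j := by
    intro i j hij hj
    rcases hij.lt_or_eq with h | h
    · exact (hx i j h hj).le
    · rw [h]
  have hGx : ∀ i ≤ n, G.eval (x i) = 0 := fun i hi => (hGroots (x i)).2 ⟨i, hi, rfl⟩
  have hPx : ∀ i ≤ n, P.eval (x i) ≠ 0 := fun i hi h => hcommon (x i) ⟨hGx i hi, h⟩
  have key : ∀ i ≤ n, A (x i) * P.eval (x i) = (x i - E) * Q.eval (x i) := by
    intro i hi
    have h := hrel (x i) (hxab i hi).1 (hxab i hi).2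
    rw [hGx i hi, mul_zero, zero_add] at h
    exact h
  have hAx : ∀ i ≤ n, 0 < A (x i) := fun i hi => hApos _ (hxab i hi).1 (hxab i hi).2
  have hQeval : ∀ t : ℝ, Q.eval t = ∏ j ∈ Finset.range (n+1), (t - y j) :=
    my_prod_form Q (n+1) hQmonic hQdeg y (fun i j hij hj => hy i j hij (by omega))
      (fun i hi => (hQroots (y i)).2 ⟨i, by omega, rfl⟩)
  have hQpair : ∀ i < n, Q.eval (x i) * Q.eval (x (i+1)) < 0 := by
    intro i hi
    rw [hQeval, hQeval, ← Finset.prod_mul_distrib]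
    have hmem : i ∈ Finset.range (n+1) := by simp; omega
    rw [← Finset.mul_prod_erase _ _ hmem]
    apply mul_neg_of_neg_of_pos
    · exact mul_neg_of_neg_of_pos (sub_neg.2 (hGQ1 i (by omega))) (sub_pos.2 (hGQ2 i hi))
    · apply Finset.prod_pos
      intro j hj
      have hj1 : j ≤ n := by
        have := Finset.mem_of_mem_erase hj
        simp at this; omega
      have hj2 : j ≠ i := Finset.ne_of_mem_erase hj
      rcases lt_or_gt_of_ne hj2 with h | h
      · have h1 : y j < x (j+1) := hGQ2 j (by omega)
        have h2 : x (j+1) ≤ x i := hxle (j+1) i (by omega) (by omega)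
        have h3 : x i < x (i+1) := hx i (i+1) (by omega) (by omega)
        exact mul_pos (by linarith) (by linarith)
      · have h1 : x j < y j := hGQ1 j hj1
        have h2 : x (i+1) ≤ x j := hxle (i+1) j h hj1
        exact mul_pos_of_neg_of_neg (by
          have h3 : x i < x (i+1) := hx i (i+1) (by omega) (by omega)
          linarith) (by linarith)
  have hQn : Q.eval (x n) < 0 := by
    rw [hQeval, Finset.prod_range_succ]
    apply mul_neg_of_pos_of_neg
    · apply Finset.prod_pos
      intro j hj
      simp only [Finset.mem_range] at hj
      have h1 : y j < x (j+1) := hGQ2 j hj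
      have h2 : x (j+1) ≤ x n := hxle (j+1) n (by omega) le_rfl
      linarith
    · have := hGQ1 n le_rfl; linarith
  have hxEne : ∀ i ≤ n, x i ≠ E := by
    intro i hi h
    have hk := key i hi
    have h2 : x i - E = 0 := by rw [h]; ring
    rw [h2, zero_mul] at hk
    exact hPx i hi ((mul_eq_zero.1 hk).resolve_left (ne_of_gt (hAx i hi)))
  have hPpair : ∀ i < n, 0 < (x i - E) * (x (i+1) - E) →
      P.eval (x i) * P.eval (x (i+1)) < 0 := by
    intro i hi hEE
    have k1 := key i (by omega)
    have k2 := key (i+1) (by omega)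
    have hA1 := hAx i (by omega)
    have hA2 := hAx (i+1) (by omega)
    have hq := hQpair i hi
    have hmul : (A (x i) * A (x (i+1))) * (P.eval (x i) * P.eval (x (i+1))) =
        ((x i - E) * (x (i+1) - E)) * (Q.eval (x i) * Q.eval (x (i+1))) := by
      calc (A (x i) * A (x (i+1))) * (P.eval (x i) * P.eval (x (i+1)))
          = (A (x i) * P.eval (x i)) * (A (x (i+1)) * P.eval (x (i+1))) := by ring
        _ = ((x i - E) * Q.eval (x i)) * ((x (i+1) - E) * Q.eval (x (i+1))) := by rw [k1, k2]
        _ = _ := by ring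
    nlinarith [mul_pos hA1 hA2, mul_neg_of_pos_of_neg hEE hq]
  have hPn : E < x n → P.eval (x n) < 0 := by
    intro hE
    have k1 := key n le_rfl
    have hA1 := hAx n le_rfl
    nlinarith [mul_neg_of_pos_of_neg (sub_pos.2 hE) hQn]
  -- Part (i): x 0 < E
  have hx0E : x 0 < E := by
    by_contra hcon
    push_neg at hcon
    have hExi : ∀ i ≤ n, E < x i := by
      intro i hi
      rcases Nat.eq_zero_or_pos i with rfl | hpos
      · exact lt_of_le_of_ne hcon (fun h => hxEne 0 (by omega) h.symm)
      · exact lt_of_le_of_lt hcon (hx 0 i hpos hi)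
    have hsign : ∀ i < n, P.eval (x i) * P.eval (x (i+1)) < 0 := by
      intro i hi
      apply hPpair i hi
      have h1 := hExi i (by omega)
      have h2 := hExi (i+1) (by omega)
      nlinarith
    choose! c hc1 hc2 hc3 using fun i (hi : i < n) =>
      my_ivt P (x i) (x (i+1)) (hx i (i+1) (by omega) (by omega)) (hsign i hi)
    obtain ⟨d, hd1, hd2⟩ := my_tail_root P hPmonic (by omega)
      (x n) (hPn (hExi n le_rfl))
    obtain ⟨r, hr1, hr2⟩ : ∃ r : ℕ → ℝ, (∀ i < n, r i = c i) ∧ r n = d :=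
      ⟨fun i => if i < n then c i else d, fun i hi => by simp [hi], by simp⟩
    have hrmono : ∀ i j : ℕ, i < j → j < n + 1 → r i < r j := by
      intro i j hij hj
      have hi' : i < n := by omega
      rw [hr1 i hi']
      have h2 : c i < x (i+1) := hc2 i hi'
      by_cases hj' : j < n
      · rw [hr1 j hj']
        have h4 : x j < c j := hc1 j hj'
        have h5 : x (i+1) ≤ x j := hxle (i+1) j (by omega) (by omega)
        linarith
      · have hjn : j = n := by omega
        rw [hjn, hr2]
        have h5 : x (i+1) ≤ x n := hxle (i+1) n (by omega) le_rfl
        linarith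
    have hrroots : ∀ i < n + 1, P.eval (r i) = 0 := by
      intro i hi
      by_cases h : i < n
      · rw [hr1 i h]; exact hc3 i h
      · have : i = n := by omega
        rw [this, hr2]; exact hd2
    have := my_count_le P hP0 (n+1) r hrmono hrroots
    rw [hPreal] at this
    omega
  -- the pivot index k
  obtain ⟨k, hkn, hxkE, hkmax⟩ :
      ∃ k, k ≤ n ∧ x k < E ∧ ∀ j ≤ n, x j < E → j ≤ k :=
    ⟨Nat.findGreatest (fun i => x i < E) n, Nat.findGreatest_le n,
      Nat.findGreatest_spec (P := fun i => x i < E) (Nat.zero_le n) hx0E,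
      fun j hj hjE => Nat.le_findGreatest (P := fun i => x i < E) hj hjE⟩
  have hEk1 : k < n → E < x (k+1) := by
    intro hkn'
    have h1 : ¬ x (k+1) < E := fun h => by have := hkmax (k+1) (by omega) h; omega
    have h2 : E ≤ x (k+1) := le_of_not_gt h1
    exact lt_of_le_of_ne h2 (fun h => hxEne (k+1) (by omega) h.symm)
  have hExj : ∀ j ≤ n, k < j → E < x j := by
    intro j hj hkj
    have h1 := hEk1 (by omega)
    have h2 := hxle (k+1) j hkj hj
    linarith
  have hxjE : ∀ j ≤ n, j ≤ k → x j < E :=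
    fun j _ hjk => lt_of_le_of_lt (hxle j k hjk hkn) hxkE
  -- roots between consecutive x's away from k
  have hsignik : ∀ i, i < n → i ≠ k → P.eval (x i) * P.eval (x (i+1)) < 0 := by
    intro i hi hik
    apply hPpair i hi
    rcases lt_or_gt_of_ne hik with h | h
    · have h1 := hxjE i (by omega) (by omega)
      have h2 := hxjE (i+1) (by omega) (by omega)
      nlinarith
    · have h1 := hExj i (by omega) h
      have h2 := hExj (i+1) (by omega) (by omega)
      nlinarith
  choose! c hc1 hc2 hc3 using fun i (hi : i < n ∧ i ≠ k) =>
    my_ivt P (x i) (x (i+1)) (hx i (i+1) (by omega) (by omega)) (hsignik i hi.1 hi.2)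
  have htail : k < n → ∃ d, x n < d ∧ P.eval d = 0 := by
    intro hkn'
    exact my_tail_root P hPmonic (by omega) (x n) (hPn (hExj n le_rfl hkn'))
  obtain ⟨d, hdprop⟩ : ∃ d : ℝ, k < n → x n < d ∧ P.eval d = 0 := by
    by_cases h : k < n
    · obtain ⟨d, hd⟩ := htail h
      exact ⟨d, fun _ => hd⟩
    · exact ⟨0, fun h' => absurd h' h⟩
  obtain ⟨z, hzk, hzc, hzd⟩ :
      ∃ z : ℕ → ℝ, z k = E ∧ (∀ i, i ≠ k → i < n → z i = c i) ∧ (n ≠ k → z n = d) :=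
    ⟨fun i => if i = k then E else if i < n then c i else d,
      by simp, fun i h1 h2 => by simp [h1, h2], fun h => by simp [h]⟩
  have hzlow : ∀ i ≤ n, x i < z i := by
    intro i hi
    by_cases h1 : i = k
    · rw [h1, hzk]; exact hxkE
    · by_cases h2 : i < n
      · rw [hzc i h1 h2]; exact hc1 i ⟨h2, h1⟩
      · have hin : i = n := by omega
        rw [hin, hzd (hin ▸ h1)]
        exact (hdprop (by omega)).1
  have hzhigh : ∀ i < n, z i < x (i+1) := by
    intro i hi
    by_cases h1 : i = k
    · rw [h1, hzk]; exact hEk1 (h1 ▸ hi)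
    · rw [hzc i h1 hi]; exact hc2 i ⟨hi, h1⟩
  have hzmono : ∀ i j : ℕ, i < j → j ≤ n → z i < z j := by
    intro i j hij hj
    have h1 := hzhigh i (by omega)
    have h2 := hzlow j hj
    have h3 := hxle (i+1) j (by omega) hj
    linarith
  have hzroot : ∀ i ≤ n, i ≠ k → P.eval (z i) = 0 := by
    intro i hi h1
    by_cases h2 : i < n
    · rw [hzc i h1 h2]; exact hc3 i ⟨h2, h1⟩
    · have hin : i = n := by omega
      rw [hin, hzd (hin ▸ h1)]
      exact (hdprop (by omega)).2
  -- all roots of P are the z i with i ≠ k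
  obtain ⟨τ, hτ1, hτ2⟩ :
      ∃ τ : ℕ → ℝ, (∀ i, i < k → τ i = z i) ∧ (∀ i, ¬ i < k → τ i = z (i+1)) :=
    ⟨fun i => if i < k then z i else z (i+1),
      fun i h => by simp [h], fun i h => by simp [h]⟩
  have hτz : ∀ i < n, ∃ j ≤ n, j ≠ k ∧ τ i = z j := by
    intro i hi
    by_cases h : i < k
    · exact ⟨i, by omega, by omega, hτ1 i h⟩
    · exact ⟨i+1, by omega, by omega, hτ2 i h⟩
  have hτmono : ∀ i j : ℕ, i < j → j < n → τ i < τ j := by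
    intro i j hij hj
    by_cases h1 : i < k
    · rw [hτ1 i h1]
      by_cases h2 : j < k
      · rw [hτ1 j h2]; exact hzmono i j hij (by omega)
      · rw [hτ2 j h2]; exact hzmono i (j+1) (by omega) (by omega)
    · rw [hτ2 i h1, hτ2 j (by omega)]
      exact hzmono (i+1) (j+1) (by omega) (by omega)
  have hτroot : ∀ i < n, P.eval (τ i) = 0 := by
    intro i hi
    obtain ⟨j, hj, hjk, hje⟩ := hτz i hi
    rw [hje]; exact hzroot j hj hjk
  have hall := my_count_all P hP0 n hPreal τ hτmono hτroot
  have hrootz : ∀ s : ℝ, P.eval s = 0 → ∃ j ≤ n, j ≠ k ∧ z j = s := by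
    intro s hs
    obtain ⟨i, hi, hτi⟩ := hall s hs
    obtain ⟨j, hj, hjk, hje⟩ := hτz i hi
    exact ⟨j, hj, hjk, by rw [← hje, hτi]⟩
  refine ⟨hx0E, ⟨z, hzmono, ?_, hzlow, hzhigh⟩, ?_, ?_⟩
  · intro r
    constructor
    · rintro (rfl | hr)
      · exact ⟨k, hkn, hzk⟩
      · obtain ⟨j, hj, _, hje⟩ := hrootz r hr
        exact ⟨j, hj, hje⟩
    · rintro ⟨i, hi, rfl⟩
      by_cases h1 : i = k
      · left; rw [h1, hzk]
      · right; exact hzroot i hi h1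
  · -- forward direction of (iii)
    rintro ⟨t, htmono, htroots, htbound⟩
    by_contra hcon
    have hklt : k < n := by
      have hkne : k ≠ n := fun h => hcon (h ▸ hxkE)
      omega
    obtain ⟨hd1, hd2⟩ := hdprop hklt
    obtain ⟨i, hi, hti⟩ := (htroots d).1 hd2
    have h1 := (htbound i hi).2
    have h2 := hxle (i+1) n (by omega) le_rfl
    rw [hti] at h1
    linarith
  · -- backward direction of (iii)
    intro hE
    have hkeq : k = n := le_antisymm hkn (hkmax n le_rfl hE)
    refine ⟨z, fun i j hij hj => hzmono i j hij (by omega), ?_, ?_⟩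
    · intro r
      constructor
      · intro hr
        obtain ⟨j, hj, hjk, hje⟩ := hrootz r hr
        exact ⟨j, by omega, hje⟩
      · rintro ⟨i, hi, rfl⟩
        exact hzroot i (by omega) (by omega)
    · intro i hi
      exact ⟨hzlow i (by omega), hzhigh i hi⟩
end

section
/- Let n ≥ 2, let (a,b) ⊆ ℝ be a (finite or infinite) open interval, and let G, P be monic real polynomials of degree n and Q a monic real polynomial of degree n−1, all of whose zeros are real and lie in (a,b), with the zeros of G and of Q simple. Denote the zeros of G by x_1 < ⋯ < x_n and the zeros of Q by y_1 < ⋯ < y_{n−1}, and assume G ≺ Q, i.e. x_1 < y_1 < x_2 < y_2 < ⋯ < y_{n−1} < x_n. Suppose there exist E ∈ ℝ and real polynomials A, B with A(x) > 0 for all x ∈ (a,b), such that A(x)P(x) = B(x)G(x) − (x−E)Q(x) identically. Assume B(E) ≠ 0 and that G and P have no common zero. Then, writing z_1 < z_2 < ⋯ < z_{n+1} for the ascending arrangement of E together with the n zeros of P, one has z_1 < x_1 < z_2 < x_2 < ⋯ < x_n < z_{n+1}, i.e. (x−E)P(x) ≺ G(x). In particular, if E > x_n then the zeros t_1 < ⋯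 < t_n of P satisfy t_1 < x_1 < t_2 < x_2 < ⋯ < t_n < x_n (i.e. P ≺ G), while if E < x_1 then x_1 < t_1 < x_2 < t_2 < ⋯ < x_n < t_n (i.e. G ≺ P). -/
open Polynomial


lemma parity_of_signs {c : ℝ} {k m : ℕ} (h1 : 0 < (-1:ℝ)^k * c) (h2 : 0 < (-1:ℝ)^m * c) :
    k % 2 = m % 2 := by
  rcases Nat.even_or_odd k with hk | hk <;> rcases Nat.even_or_odd m with hm | hm
  · rw [Nat.even_iff] at hk hm; omega
  · rw [hk.neg_one_pow] at h1; rw [hm.neg_one_pow] at h2; nlinarith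
  · rw [hk.neg_one_pow] at h1; rw [hm.neg_one_pow] at h2; nlinarith
  · rw [Nat.odd_iff] at hk hm; omega

lemma sign_from_roots (p : ℝ[X]) (hm : p.Monic) (hc : p.roots.card = p.natDegree)
    (t : ℝ) (ht : p.eval t ≠ 0) :
    0 < (-1:ℝ)^((p.roots.filter (fun r => t < r)).card) * p.eval t := by
  have hfact := Polynomial.prod_multiset_X_sub_C_of_monic_of_roots_card_eq hm hc
  have heval : p.eval t = (p.roots.map (fun r => t - r)).prod := by
    conv_lhs => rw [← hfact]
    rw [Polynomial.eval_multiset_prod, Multiset.map_map]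
    congr 1
    apply Multiset.map_congr rfl
    intro r _
    simp
  have hsplit := Multiset.filter_add_not (fun r => t < r) p.roots
  set s1 := p.roots.filter (fun r => t < r) with hs1
  set s2 := p.roots.filter (fun r => ¬ t < r) with hs2
  have h1 : (s1.map (fun r => t - r)).prod = (-1:ℝ)^(s1.card) * (s1.map (fun r => r - t)).prod := by
    have : (s1.map (fun r => t - r)) = (s1.map (fun r => r - t)).map Neg.neg := by
      rw [Multiset.map_map]; apply Multiset.map_congr rfl; intro r _; simp
    rw [this, Multiset.prod_map_neg, Multiset.card_map]
  have hpos1 : 0 < (s1.map (fun r => r - t)).prod := by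
    apply Multiset.prod_pos
    intro a ha
    obtain ⟨r, hr, rfl⟩ := Multiset.mem_map.1 ha
    have := (Multiset.mem_filter.1 hr).2
    linarith
  have hpos2 : 0 < (s2.map (fun r => t - r)).prod := by
    apply Multiset.prod_pos
    intro a ha
    obtain ⟨r, hr, rfl⟩ := Multiset.mem_map.1 ha
    obtain ⟨hmem, hnlt⟩ := Multiset.mem_filter.1 hr
    have hne : r ≠ t := by
      intro h; subst h
      exact ht ((Polynomial.mem_roots hm.ne_zero).1 hmem)
    have : r < t := lt_of_le_of_ne (not_lt.1 hnlt) hne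
    linarith
  have hprod : p.eval t = (s1.map (fun r => t - r)).prod * (s2.map (fun r => t - r)).prod := by
    rw [heval]
    conv_lhs => rw [← hsplit]
    rw [Multiset.map_add, Multiset.prod_add]
  rw [hprod, h1]
  have hk : ((-1:ℝ)^(s1.card)) * ((-1:ℝ)^(s1.card)) = 1 := by
    rw [← mul_pow]; norm_num
  have heq : (-1:ℝ)^(s1.card) * ((-1:ℝ)^(s1.card) * (s1.map (fun r => r - t)).prod * (s2.map (fun r => t - r)).prod)
      = (s1.map (fun r => r - t)).prod * (s2.map (fun r => t - r)).prod := by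
    rw [show ∀ a b c : ℝ, a * (a*b*c) = (a*a)*(b*c) from fun a b c => by ring, hk, one_mul]
  rw [heq]
  exact mul_pos hpos1 hpos2


/-- Theorem 2.2 — `G`, `P` monic of degree `n`, `Q` monic of degree `n-1`,
all zeros in the (possibly infinite) interval `(a,b)`, `G ≺ Q`, and
`A(x)P(x) = B(x)G(x) − (x−E)Q(x)` identically with polynomials `A`, `B`, `A > 0` on `(a,b)`.
Then `(x−E)P(x) ≺ G(x)`; in particular `P ≺ G` when `E > x_n`, and `G ≺ P` when `E < x_1`.
Zeros of `G` are `x 0 < … < x (n-1)`, zeros of `Q` are `y 0 < … < y (n-2)`. -/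
theorem stmt_2 (n : ℕ) (hn : 2 ≤ n) (a b : EReal)
    (G Q P : Polynomial ℝ) (E : ℝ) (A B : Polynomial ℝ)
    (x y : ℕ → ℝ)
    (hGmonic : G.Monic) (hGdeg : G.natDegree = n)
    (hPmonic : P.Monic) (hPdeg : P.natDegree = n)
    (hQmonic : Q.Monic) (hQdeg : Q.natDegree = n - 1)
    (hPreal : P.roots.card = n)
    (hPab : ∀ r : ℝ, P.eval r = 0 → a < (r : EReal) ∧ (r : EReal) < b)
    (hx : ∀ i j : ℕ, i < j → j < n → x i < x j)
    (hy : ∀ i j : ℕ, i < j → j < n - 1 → y i < y j)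
    (hGroots : ∀ r : ℝ, G.eval r = 0 ↔ ∃ i < n, x i = r)
    (hQroots : ∀ r : ℝ, Q.eval r = 0 ↔ ∃ i < n - 1, y i = r)
    (hxab : ∀ i < n, a < (x i : EReal) ∧ (x i : EReal) < b)
    (hyab : ∀ i < n - 1, a < (y i : EReal) ∧ (y i : EReal) < b)
    (hGQ : ∀ i < n - 1, x i < y i ∧ y i < x (i + 1))
    (hApos : ∀ t : ℝ, a < (t : EReal) → (t : EReal) < b → 0 < A.eval t)
    (hrel : A * P = B * G - (Polynomial.X - Polynomial.C E) * Q)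
    (hBE : B.eval E ≠ 0)
    (hcommon : ∀ r : ℝ, ¬(G.eval r = 0 ∧ P.eval r = 0)) :
    (∃ z : ℕ → ℝ, (∀ i j : ℕ, i < j → j ≤ n → z i < z j) ∧
      (∀ r : ℝ, (r = E ∨ P.eval r = 0) ↔ ∃ i ≤ n, z i = r) ∧
      (∀ i < n, z i < x i) ∧ (∀ i < n, x i < z (i + 1))) ∧
    (x (n - 1) < E →
      ∃ t : ℕ → ℝ, (∀ i j : ℕ, i < j → j < n → t i < t j) ∧
        (∀ r : ℝ, P.eval r = 0 ↔ ∃ i < n, t i = r) ∧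
        (∀ i < n, t i < x i) ∧ (∀ i < n - 1, x i < t (i + 1))) ∧
    (E < x 0 →
      ∃ t : ℕ → ℝ, (∀ i j : ℕ, i < j → j < n → t i < t j) ∧
        (∀ r : ℝ, P.eval r = 0 ↔ ∃ i < n, t i = r) ∧
        (∀ i < n, x i < t i) ∧ (∀ i < n - 1, t i < x (i + 1))) := by
  classical
  have hxmono : ∀ i j : ℕ, i ≤ j → j < n → x i ≤ x j := by
    intro i j hij hj
    rcases eq_or_lt_of_le hij with rfl | h
    · exact le_refl _
    · exact (hx i j h hj).le
  have hG0 : ∀ i < n, G.eval (x i) = 0 := fun i hi => (hGroots (x i)).2 ⟨i, hi, rfl⟩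
  have hPx : ∀ i < n, P.eval (x i) ≠ 0 := fun i hi h => hcommon (x i) ⟨hG0 i hi, h⟩
  have hrelEval : ∀ t : ℝ, A.eval t * P.eval t = B.eval t * G.eval t - (t - E) * Q.eval t := by
    intro t
    have := congrArg (Polynomial.eval t) hrel
    simpa using this
  have hAx : ∀ i < n, 0 < A.eval (x i) := fun i hi => hApos (x i) (hxab i hi).1 (hxab i hi).2
  have hxE : ∀ i < n, x i ≠ E := by
    intro i hi heq
    have h0 : A.eval (x i) * P.eval (x i) = 0 := by
      rw [hrelEval (x i), hG0 i hi, heq]; ring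
    exact hPx i hi ((mul_eq_zero.1 h0).resolve_left (ne_of_gt (hAx i hi)))
  have hPE : P.eval E ≠ 0 := by
    intro h
    have h0 := hrelEval E
    rw [h, mul_zero, sub_self, zero_mul, sub_zero] at h0
    have hGE : G.eval E = 0 := by
      rcases mul_eq_zero.1 h0.symm with h' | h'
      · exact absurd h' hBE
      · exact h'
    exact hcommon E ⟨hGE, h⟩
  -- Q factorization
  have hQne : Q ≠ 0 := hQmonic.ne_zero
  set M : Multiset ℝ := (Finset.range (n-1)).val.map y with hM
  have hMnodup : M.Nodup := by
    apply Multiset.Nodup.map_on _ (Finset.range (n-1)).nodup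
    intro i hi j hj hyij
    rw [Finset.mem_val, Finset.mem_range] at hi hj
    by_contra hne
    rcases Nat.lt_or_ge i j with h | h
    · exact absurd hyij (ne_of_lt (hy i j h hj))
    · exact absurd hyij.symm (ne_of_lt (hy j i (lt_of_le_of_ne h (Ne.symm hne)) hi))
  have hMle : M ≤ Q.roots := by
    rw [Multiset.le_iff_count]
    intro r
    by_cases hr : r ∈ M
    · rw [Multiset.count_eq_one_of_mem hMnodup hr]
      apply Multiset.one_le_count_iff_mem.2
      rw [Polynomial.mem_roots hQne]
      obtain ⟨i, hi, rfl⟩ := Multiset.mem_map.1 hr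
      rw [Finset.mem_val, Finset.mem_range] at hi
      exact (hQroots (y i)).2 ⟨i, hi, rfl⟩
    · rw [Multiset.count_eq_zero_of_notMem hr]; exact Nat.zero_le _
  have hMcard : Multiset.card M = n - 1 := by simp [hM]
  have hQroots_eq : Q.roots = M := by
    symm
    apply Multiset.eq_of_le_of_card_le hMle
    rw [hMcard]
    calc Multiset.card Q.roots ≤ Q.natDegree := Polynomial.card_roots' Q
      _ = n - 1 := hQdeg
  have hQcard : Multiset.card Q.roots = Q.natDegree := by
    rw [hQroots_eq, hMcard, hQdeg]
  have hQeval : ∀ t : ℝ, Q.eval t = ∏ j ∈ Finset.range (n-1), (t - y j) := by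
    intro t
    conv_lhs => rw [← Polynomial.prod_multiset_X_sub_C_of_monic_of_roots_card_eq hQmonic hQcard]
    rw [Polynomial.eval_multiset_prod, hQroots_eq, hM, Multiset.map_map, Multiset.map_map,
      Finset.prod_eq_multiset_prod]
    congr 1
    apply Multiset.map_congr rfl
    intro j _
    simp
  have hQsign : ∀ i < n, 0 < (-1:ℝ)^(n-1-i) * Q.eval (x i) := by
    intro i hi
    have hi' : i ≤ n - 1 := by omega
    rw [hQeval, Finset.range_eq_Ico, ← Finset.prod_Ico_consecutive _ (Nat.zero_le i) hi']
    have hpos1 : 0 < ∏ j ∈ Finset.Ico 0 i, (x i - y j) := by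
      apply Finset.prod_pos
      intro j hj
      have hj' : j < i := (Finset.mem_Ico.1 hj).2
      have h1 : y j < x (j+1) := (hGQ j (by omega)).2
      have h2 : x (j+1) ≤ x i := hxmono _ _ (by omega) hi
      linarith
    have heq2 : ∏ j ∈ Finset.Ico i (n-1), (x i - y j)
        = (-1:ℝ)^(n-1-i) * ∏ j ∈ Finset.Ico i (n-1), (y j - x i) := by
      have h1 : ∀ j ∈ Finset.Ico i (n-1), x i - y j = (-1) * (y j - x i) := fun j _ => by ring
      rw [Finset.prod_congr rfl h1, Finset.prod_mul_distrib, Finset.prod_const, Nat.card_Ico]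
    have hpos2 : 0 < ∏ j ∈ Finset.Ico i (n-1), (y j - x i) := by
      apply Finset.prod_pos
      intro j hj
      obtain ⟨h1, h2⟩ := Finset.mem_Ico.1 hj
      have h3 : x i ≤ x j := hxmono _ _ h1 (by omega)
      have h4 := (hGQ j h2).1
      linarith
    rw [heq2]
    have hk : ((-1:ℝ)^(n-1-i)) * ((-1:ℝ)^(n-1-i)) = 1 := by rw [← mul_pow]; norm_num
    rw [show ∀ a p1 p2 : ℝ, a * (p1 * (a * p2)) = (a*a) * (p1*p2) from fun a p1 p2 => by ring,
      hk, one_mul]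
    exact mul_pos hpos1 hpos2
  -- R := (X - E) * P
  set R : Polynomial ℝ := (X - C E) * P with hRdef
  have hPne : P ≠ 0 := hPmonic.ne_zero
  have hRne : R ≠ 0 := mul_ne_zero (X_sub_C_ne_zero E) hPne
  have hReval : ∀ t, R.eval t = (t - E) * P.eval t := by intro t; simp [hRdef]
  have hRroots : R.roots = E ::ₘ P.roots := by
    rw [hRdef, Polynomial.roots_mul (by rw [← hRdef]; exact hRne), roots_X_sub_C,
      Multiset.singleton_add]
  have hRcard : Multiset.card R.roots = n + 1 := by
    rw [hRroots, Multiset.card_cons, hPreal]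
  have hRmonic : R.Monic := (monic_X_sub_C E).mul hPmonic
  have hRdeg : R.natDegree = n + 1 := by
    rw [hRdef, Polynomial.natDegree_mul (X_sub_C_ne_zero E) hPne, natDegree_X_sub_C, hPdeg]
    omega
  have hRsplitcard : Multiset.card R.roots = R.natDegree := by rw [hRcard, hRdeg]
  have hRzero : ∀ r, R.eval r = 0 ↔ (r = E ∨ P.eval r = 0) := by
    intro r; rw [hReval, mul_eq_zero, sub_eq_zero]
  have hRxne : ∀ i < n, R.eval (x i) ≠ 0 := by
    intro i hi h
    rcases (hRzero _).1 h with h | h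
    · exact hxE i hi h
    · exact hPx i hi h
  have hRsign : ∀ i < n, 0 < (-1:ℝ)^(n-i) * R.eval (x i) := by
    intro i hi
    have hA := hAx i hi
    have h1 := hrelEval (x i)
    rw [hG0 i hi, mul_zero, zero_sub] at h1
    have h2 : A.eval (x i) * R.eval (x i) = -((x i - E)^2 * Q.eval (x i)) := by
      rw [hReval]
      calc A.eval (x i) * ((x i - E) * P.eval (x i))
          = (x i - E) * (A.eval (x i) * P.eval (x i)) := by ring
        _ = (x i - E) * -((x i - E) * Q.eval (x i)) := by rw [h1]
        _ = -((x i - E)^2 * Q.eval (x i)) := by ring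
    have hsq : 0 < (x i - E)^2 := pow_two_pos_of_ne_zero (sub_ne_zero.2 (hxE i hi))
    have hQs := hQsign i hi
    have hni : n - i = (n - 1 - i) + 1 := by omega
    have h3 : 0 < (-1:ℝ)^(n-i) * (A.eval (x i) * R.eval (x i)) := by
      rw [h2, hni, pow_succ]
      rw [show ∀ a s q : ℝ, (a * -1) * -(s * q) = s * (a * q) from fun a s q => by ring]
      exact mul_pos hsq hQs
    have h4 : 0 < A.eval (x i) * ((-1:ℝ)^(n-i) * R.eval (x i)) := by
      rw [show A.eval (x i) * ((-1:ℝ)^(n-i) * R.eval (x i))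
          = (-1:ℝ)^(n-i) * (A.eval (x i) * R.eval (x i)) from by ring]
      exact h3
    exact (mul_pos_iff_of_pos_left hA).1 h4
  have hNsign : ∀ i < n, (Multiset.card (R.roots.filter (fun r => x i < r))) % 2 = (n - i) % 2 :=
    fun i hi =>
      parity_of_signs (sign_from_roots R hRmonic hRsplitcard (x i) (hRxne i hi)) (hRsign i hi)
  -- existence of roots in each gap
  have hmid : ∀ i, i + 1 < n → ∃ r, R.eval r = 0 ∧ x i < r ∧ r < x (i+1) := by
    intro i hi1
    have hff : (R.roots.filter (fun r => x i < r)).filter (fun r => x (i+1) < r)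
        = R.roots.filter (fun r => x (i+1) < r) := by
      rw [Multiset.filter_filter]
      apply Multiset.filter_congr
      intro r _
      constructor
      · exact fun h => h.1
      · exact fun h => ⟨h, lt_trans (hx i (i+1) (Nat.lt_succ_self i) hi1) h⟩
    have hsum := Multiset.filter_add_not (fun r => x (i+1) < r) (R.roots.filter (fun r => x i < r))
    have hcards : Multiset.card (R.roots.filter (fun r => x i < r))
        = Multiset.card (R.roots.filter (fun r => x (i+1) < r))
          + Multiset.card ((R.roots.filter (fun r => x i < r)).filter (fun r => ¬ x (i+1) < r)) := by
      conv_lhs => rw [← hsum]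
      rw [Multiset.card_add, hff]
    have hp1 := hNsign i (by omega)
    have hp2 := hNsign (i+1) (by omega)
    have hodd : Multiset.card ((R.roots.filter (fun r => x i < r)).filter (fun r => ¬ x (i+1) < r)) ≠ 0 := by
      omega
    obtain ⟨r, hr⟩ := Multiset.exists_mem_of_ne_zero (Multiset.card_pos.1 (Nat.pos_of_ne_zero hodd))
    obtain ⟨hr1, hr2⟩ := Multiset.mem_filter.1 hr
    obtain ⟨hr0, hr3⟩ := Multiset.mem_filter.1 hr1
    have hre : R.eval r = 0 := (Polynomial.mem_roots hRne).1 hr0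
    have hne : r ≠ x (i+1) := fun h => hRxne (i+1) (by omega) (h ▸ hre)
    exact ⟨r, hre, hr3, lt_of_le_of_ne (not_lt.1 hr2) hne⟩
  have htop : ∃ r, R.eval r = 0 ∧ x (n-1) < r := by
    have hp := hNsign (n-1) (by omega)
    have hodd : Multiset.card (R.roots.filter (fun r => x (n-1) < r)) ≠ 0 := by omega
    obtain ⟨r, hr⟩ := Multiset.exists_mem_of_ne_zero (Multiset.card_pos.1 (Nat.pos_of_ne_zero hodd))
    obtain ⟨hr0, hr1⟩ := Multiset.mem_filter.1 hr
    exact ⟨r, (Polynomial.mem_roots hRne).1 hr0, hr1⟩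
  have hbot : ∃ r, R.eval r = 0 ∧ r < x 0 := by
    have hp := hNsign 0 (by omega)
    have hsum := Multiset.filter_add_not (fun r => x 0 < r) R.roots
    have hcards : Multiset.card (R.roots.filter (fun r => x 0 < r))
        + Multiset.card (R.roots.filter (fun r => ¬ x 0 < r)) = n + 1 := by
      rw [← Multiset.card_add, hsum, hRcard]
    have hodd : Multiset.card (R.roots.filter (fun r => ¬ x 0 < r)) ≠ 0 := by omega
    obtain ⟨r, hr⟩ := Multiset.exists_mem_of_ne_zero (Multiset.card_pos.1 (Nat.pos_of_ne_zero hodd))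
    obtain ⟨hr0, hr1⟩ := Multiset.mem_filter.1 hr
    have hre : R.eval r = 0 := (Polynomial.mem_roots hRne).1 hr0
    have hne : r ≠ x 0 := fun h => hRxne 0 (by omega) (h ▸ hre)
    exact ⟨r, hre, lt_of_le_of_ne (not_lt.1 hr1) hne⟩
  have hEx : ∀ i, i ≤ n → ∃ r, R.eval r = 0 ∧ (0 < i → x (i-1) < r) ∧ (i < n → r < x i) := by
    intro i hi
    rcases Nat.eq_zero_or_pos i with rfl | hipos
    · obtain ⟨r, h1, h2⟩ := hbot
      exact ⟨r, h1, fun h => absurd h (lt_irrefl 0), fun _ => h2⟩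
    · rcases eq_or_lt_of_le hi with rfl | hilt
      · obtain ⟨r, h1, h2⟩ := htop
        exact ⟨r, h1, fun _ => h2, fun h => absurd h (lt_irrefl i)⟩
      · obtain ⟨r, h1, h2, h3⟩ := hmid (i-1) (by omega)
        refine ⟨r, h1, fun _ => h2, fun _ => ?_⟩
        have hii : i - 1 + 1 = i := by omega
        rwa [hii] at h3
  choose f hf1 hf2 hf3 using hEx
  set z : ℕ → ℝ := fun i => if h : i ≤ n then f i h else 0 with hzdef
  have hzeq : ∀ i (h : i ≤ n), z i = f i h := by
    intro i h; simp only [hzdef, dif_pos h]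
  have hzroot : ∀ i, i ≤ n → R.eval (z i) = 0 := fun i h => by rw [hzeq i h]; exact hf1 i h
  have hzhigh : ∀ i < n, z i < x i := fun i hi => by
    rw [hzeq i (le_of_lt hi)]; exact hf3 i (le_of_lt hi) hi
  have hzlow : ∀ i, 0 < i → i ≤ n → x (i-1) < z i := fun i h0 h => by
    rw [hzeq i h]; exact hf2 i h h0
  have hzlt : ∀ i j : ℕ, i < j → j ≤ n → z i < z j := by
    intro i j hij hj
    have h1 : z i < x i := hzhigh i (by omega)
    have h2 : x i ≤ x (j-1) := hxmono i (j-1) (by omega) (by omega)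
    have h3 : x (j-1) < z j := hzlow j (by omega) hj
    linarith
  have himg : (Finset.range (n+1)).image z = R.roots.toFinset := by
    apply Finset.eq_of_subset_of_card_le
    · intro r hr
      obtain ⟨i, hi, rfl⟩ := Finset.mem_image.1 hr
      rw [Finset.mem_range] at hi
      rw [Multiset.mem_toFinset, Polynomial.mem_roots hRne]
      exact hzroot i (by omega)
    · have h1 : R.roots.toFinset.card ≤ n + 1 := by
        calc R.roots.toFinset.card ≤ Multiset.card R.roots := Multiset.toFinset_card_le _
          _ = n + 1 := hRcard
      have h2 : ((Finset.range (n+1)).image z).card = n + 1 := by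
        rw [Finset.card_image_of_injOn, Finset.card_range]
        intro i hi j hj hij
        rw [Finset.coe_range, Set.mem_Iio] at hi hj
        by_contra hne
        rcases Nat.lt_or_ge i j with h | h
        · exact absurd hij (ne_of_lt (hzlt i j h (by omega)))
        · exact absurd hij.symm (ne_of_lt (hzlt j i (lt_of_le_of_ne h (Ne.symm hne)) (by omega)))
      omega
  have hrootz : ∀ r, R.eval r = 0 → ∃ i ≤ n, z i = r := by
    intro r hr
    have hmem : r ∈ R.roots.toFinset := Multiset.mem_toFinset.2 ((Polynomial.mem_roots hRne).2 hr)
    rw [← himg] at hmem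
    obtain ⟨i, hi, hzi⟩ := Finset.mem_image.1 hmem
    rw [Finset.mem_range] at hi
    exact ⟨i, by omega, hzi⟩
  refine ⟨⟨z, hzlt, ?_, hzhigh, ?_⟩, ?_, ?_⟩
  · intro r
    constructor
    · intro h; exact hrootz r ((hRzero r).2 h)
    · rintro ⟨i, hi, rfl⟩
      exact (hRzero _).1 (hzroot i hi)
  · intro i hi
    have h := hzlow (i+1) (by omega) (by omega)
    simpa using h
  · -- Part 2 : x (n-1) < E
    intro hE
    have hEn : z n = E := by
      obtain ⟨i, hi, hzi⟩ := hrootz E ((hRzero E).2 (Or.inl rfl))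
      rcases eq_or_lt_of_le hi with rfl | hi'
      · exact hzi
      · exfalso
        have h1 : z i < x i := hzhigh i hi'
        have h2 : x i ≤ x (n-1) := hxmono i (n-1) (by omega) (by omega)
        rw [hzi] at h1
        linarith
    refine ⟨z, ?_, ?_, ?_, ?_⟩
    · intro i j hij hj; exact hzlt i j hij (by omega)
    · intro r
      constructor
      · intro hPr
        obtain ⟨i, hi, hzi⟩ := hrootz r ((hRzero r).2 (Or.inr hPr))
        rcases eq_or_lt_of_le hi with rfl | hi'
        · exfalso
          rw [hEn] at hzi
          rw [← hzi] at hPr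
          exact hPE hPr
        · exact ⟨i, hi', hzi⟩
      · rintro ⟨i, hi, rfl⟩
        have hroot := hzroot i (le_of_lt hi)
        rcases (hRzero _).1 hroot with h | h
        · exfalso
          have h1 : z i < x i := hzhigh i hi
          have h2 : x i ≤ x (n-1) := hxmono i (n-1) (by omega) (by omega)
          rw [h] at h1
          linarith
        · exact h
    · exact fun i hi => hzhigh i hi
    · intro i hi
      have h := hzlow (i+1) (by omega) (by omega)
      simpa using h
  · -- Part 3 : E < x 0
    intro hE
    have hE0 : z 0 = E := by
      obtain ⟨i, hi, hzi⟩ := hrootz E ((hRzero E).2 (Or.inl rfl))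
      rcases Nat.eq_zero_or_pos i with rfl | hipos
      · exact hzi
      · exfalso
        have h1 : x (i-1) < z i := hzlow i hipos hi
        have h2 : x 0 ≤ x (i-1) := hxmono 0 (i-1) (by omega) (by omega)
        rw [hzi] at h1
        linarith
    refine ⟨fun i => z (i+1), ?_, ?_, ?_, ?_⟩
    · intro i j hij hj; exact hzlt (i+1) (j+1) (by omega) (by omega)
    · intro r
      constructor
      · intro hPr
        obtain ⟨i, hi, hzi⟩ := hrootz r ((hRzero r).2 (Or.inr hPr))
        rcases Nat.eq_zero_or_pos i with rfl | hipos
        · exfalso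
          rw [hE0] at hzi
          rw [← hzi] at hPr
          exact hPE hPr
        · refine ⟨i - 1, by omega, ?_⟩
          show z (i - 1 + 1) = r
          rw [show i - 1 + 1 = i from by omega]
          exact hzi
      · rintro ⟨i, hi, rfl⟩
        have hroot := hzroot (i+1) (by omega)
        rcases (hRzero _).1 hroot with h | h
        · exfalso
          have h1 : x i < z (i+1) := by
            have := hzlow (i+1) (by omega) (by omega); simpa using this
          have h2 : x 0 ≤ x i := hxmono 0 i (by omega) hi
          rw [h] at h1
          linarith
        · exact h
    · intro i hi
      have h := hzlow (i+1) (by omega) (by omega)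
      simpa using h
    · intro i hi
      exact hzhigh (i+1) (by omega)
end

section
/- Let n ≥ 2, let (a,b) ⊆ ℝ be a (finite or infinite) open interval, and let G, P be monic real polynomials of degree n and Q a monic real polynomial of degree n+1, all of whose zeros are real and lie in (a,b), with the zeros of G and of Q simple. Denote the zeros of G by x_1 < ⋯ < x_n and the zeros of Q by y_1 < ⋯ < y_{n+1}, and assume Q ≺ G, i.e. y_1 < x_1 < y_2 < x_2 < ⋯ < y_n < x_n < y_{n+1}. Suppose there exist E ∈ ℝ and continuous functions A, B on (a,b) with A(x) > 0 for all x ∈ (a,b), such that A(x)P(x) = B(x)G(x) − (x−E)Q(x) for all x ∈ (a,b). Assume B(E) ≠ 0 and that G and P have no common zero. Then: if E < x_1, the zeros t_1 < ⋯ < t_n of P satisfy t_1 < x_1 < t_2 < x_2 < ⋯ < t_n < x_n (i.e. P ≺ G); and if E > x_n, they satisfy x_1 < t_1 < x_2 < t_2 < ⋯ < x_n < t_n (i.e. G ≺ P). -/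
open Polynomial

/-!
At a zero `x i` of `G` the relation reads `A P = (E - x i) Q`, and `Q (x i)` has sign
`(-1) ^ (n - i)` because exactly `n - i` zeros of `Q` lie above `x i`. Hence the sign of
`P (x i)` is `(-1) ^ (n - 1 - i)` if `E < x 0` and `(-1) ^ (n - i)` if `x (n - 1) < E`.
On the other hand, since `P` is monic with only real zeros, `P u` has sign `(-1) ^ c u`, where
`c u` counts the zeros of `P` above `u`. The count `c` is antitone and its parity alternates
along the `x i`, so it must drop by exactly one at each `x i`; this places exactly one zero
of `P` in each gap of the `x i`, which is the interlacing.
-/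

theorem List.Pairwise.lt_getElem_iff {α : Type*} [LinearOrder α] {L : List α}
    (hL : L.Pairwise (· ≤ ·)) (u : α) {k : ℕ} (hk : k < L.length) :
    u < L[k] ↔ L.length ≤ k + L.countP (u < ·) := by
  have hle : ∀ i j (hi : i < L.length) (hj : j < L.length), i ≤ j → L[i] ≤ L[j] := by
    intro i j hi hj hij
    rcases hij.lt_or_eq with hij | rfl
    · exact List.pairwise_iff_getElem.1 hL i j hi hj hij
    · exact le_rfl
  have hsplit (m : ℕ) :
      L.countP (u < ·) = (L.take m).countP (u < ·) + (L.drop m).countP (u < ·) := by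
    rw [← List.countP_append, List.take_append_drop]
  constructor
  · intro hu
    have hdrop : (L.drop k).countP (u < ·) = (L.drop k).length := by
      refine List.countP_eq_length.2 fun r hr => ?_
      obtain ⟨j, hj, rfl⟩ := List.mem_iff_getElem.1 hr
      rw [List.getElem_drop]
      simpa using hu.trans_le (hle _ _ _ _ (Nat.le_add_right k j))
    rw [hsplit k, hdrop, List.length_drop]
    omega
  · intro hcount
    by_contra! hu
    have htake : (L.take (k + 1)).countP (u < ·) = 0 := by
      refine List.countP_eq_zero.2 fun r hr => ?_
      obtain ⟨j, hj, rfl⟩ := List.mem_iff_getElem.1 hr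
      rw [List.getElem_take]
      simp only [List.length_take] at hj
      simpa using (hle _ _ _ hk (by omega)).trans hu
    have := (L.drop (k + 1)).countP_le_length (p := (u < ·))
    rw [List.length_drop] at this
    rw [hsplit (k + 1), htake] at hcount
    omega

theorem Multiset.lt_getD_sort_iff {α : Type*} [LinearOrder α] (s : Multiset α) (u d : α)
    {k : ℕ} (hk : k < s.card) :
    u < (s.sort (· ≤ ·)).getD k d ↔ s.card ≤ k + s.countP (u < ·) := by
  have hlen := s.length_sort (· ≤ ·)
  rw [List.getD_eq_getElem _ _ (hlen ▸ hk), (s.pairwise_sort _).lt_getElem_iff u, hlen,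
    ← Multiset.coe_countP, s.sort_eq]

theorem Nat.eq_sub_add_of_succ_lt {n k : ℕ} {c : ℕ → ℕ}
    (hc : ∀ i, i + 1 < n → c (i + 1) < c i) (h0 : c 0 ≤ n - 1 + k) (hlast : k ≤ c (n - 1)) :
    ∀ i < n, c i = n - 1 - i + k := by
  have hdrop : ∀ i j, i ≤ j → j < n → c j + (j - i) ≤ c i := by
    intro i j hij
    induction j, hij using Nat.le_induction with
    | base => simp
    | succ j hij ih =>
      intro hj
      have := hc j hj
      have := ih (by omega)
      omega
  intro i hi
  have := hdrop 0 i (Nat.zero_le i) hi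
  have := hdrop i (n - 1) (by omega) (by omega)
  omega

section OrderedRing

variable {R : Type*} [CommRing R] [LinearOrder R] [IsStrictOrderedRing R]

theorem Multiset.neg_one_pow_countP_mul_prod_sub_pos {s : Multiset R} {u : R} (hu : u ∉ s) :
    0 < (-1) ^ s.countP (u < ·) * (s.map (u - ·)).prod := by
  induction s using Multiset.induction_on with
  | empty => simp
  | cons r s ih =>
    have ih := ih (fun h => hu (Multiset.mem_cons_of_mem h))
    have hr : r ≠ u := fun h => hu (h ▸ Multiset.mem_cons_self r s)
    rw [Multiset.map_cons, Multiset.prod_cons]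
    rcases hr.lt_or_gt with hr | hr
    · rw [Multiset.countP_cons_of_neg _ hr.not_gt]
      nlinarith [mul_pos (sub_pos.2 hr) ih]
    · rw [Multiset.countP_cons_of_pos _ hr, pow_succ]
      nlinarith [mul_pos (sub_pos.2 hr) ih]

theorem Polynomial.Splits.neg_one_pow_countP_roots_mul_eval_pos {P : R[X]} (hP : P.Splits)
    (hm : P.Monic) {u : R} (hu : ¬P.IsRoot u) :
    0 < (-1) ^ P.roots.countP (u < ·) * P.eval u := by
  rw [hP.eval_eq_prod_roots_of_monic hm]
  exact Multiset.neg_one_pow_countP_mul_prod_sub_pos fun h => hu (isRoot_of_mem_roots h)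

theorem mod_two_eq_of_neg_one_pow_mul_pos {v : R} {j k : ℕ} (hj : 0 < (-1) ^ j * v)
    (hk : 0 < (-1) ^ k * v) : j % 2 = k % 2 := by
  rw [neg_one_pow_eq_pow_mod_two] at hj hk
  rcases Nat.mod_two_eq_zero_or_one j with h | h <;>
    rcases Nat.mod_two_eq_zero_or_one k with h' | h' <;> simp_all <;> linarith

theorem neg_one_pow_mul_pos_of_mul_eq {a d p q : R} {m : ℕ} (ha : 0 < a) (hd : 0 < d)
    (hq : 0 < (-1) ^ m * q) (h : a * p = d * q) : 0 < (-1) ^ m * p := by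
  refine pos_of_mul_pos_right (a := a) ?_ ha.le
  rw [mul_left_comm, h, mul_left_comm]
  exact mul_pos hd hq

theorem Polynomial.Splits.countP_roots_gt_eq {P : R[X]} (hP : P.Splits) (hm : P.Monic)
    {n k : ℕ} (hdeg : P.natDegree = n) {x : ℕ → R} (hx : StrictMonoOn x (Set.Iio n))
    (hk : k ≤ 1) (hsign : ∀ i < n, 0 < (-1) ^ (n - 1 - i + k) * P.eval (x i)) :
    ∀ i < n, P.roots.countP (x i < ·) = n - 1 - i + k := by
  have hparity : ∀ i < n, P.roots.countP (x i < ·) % 2 = (n - 1 - i + k) % 2 := fun i hi =>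
    mod_two_eq_of_neg_one_pow_mul_pos (hP.neg_one_pow_countP_roots_mul_eval_pos hm
      fun h => (hsign i hi).ne' (by rw [h.eq_zero, mul_zero])) (hsign i hi)
  have hanti : ∀ i, i + 1 < n → P.roots.countP (x (i + 1) < ·) ≤ P.roots.countP (x i < ·) :=
    fun i hi => by
      simp only [Multiset.countP_eq_card_filter]
      exact Multiset.card_le_card (Multiset.monotone_filter_right _
        fun r hr => (hx (by simp; omega) hi (Nat.lt_succ_self i)).trans hr)
  have hle : P.roots.countP (x 0 < ·) ≤ n :=
    (Multiset.countP_le_card _ _).trans_eq (hdeg ▸ splits_iff_card_roots.1 hP)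
  rcases Nat.eq_zero_or_pos n with rfl | hn
  · simp
  refine Nat.eq_sub_add_of_succ_lt (c := fun i => P.roots.countP (x i < ·))
    (fun i hi => ?_) ?_ ?_
  · have := hparity i (by omega)
    have := hparity (i + 1) hi
    have := hanti i hi
    omega
  · have := hparity 0 hn
    omega
  · have := hparity (n - 1) (by omega)
    omega

/-- `k = 0` encodes `t 0 < x 0 < t 1 < x 1 < ⋯` and `k = 1` encodes `x 0 < t 0 < x 1 < t 1 < ⋯`. -/
theorem Polynomial.Splits.exists_roots_interlace {P : R[X]} (hP : P.Splits) (hm : P.Monic)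
    {n k : ℕ} (hdeg : P.natDegree = n) {x : ℕ → R} (hx : StrictMonoOn x (Set.Iio n))
    (hk : k ≤ 1) (hsign : ∀ i < n, 0 < (-1) ^ (n - 1 - i + k) * P.eval (x i)) :
    ∃ t : ℕ → R, (∀ i j, i < j → j < n → t i < t j) ∧
      (∀ r, P.eval r = 0 ↔ ∃ j < n, t j = r) ∧
      ∀ i < n, ∀ j < n, (t j < x i ↔ j + k ≤ i) ∧ (x i < t j ↔ i < j + k) := by
  have hcard : P.roots.card = n := hdeg ▸ splits_iff_card_roots.1 hP
  set L := P.roots.sort (· ≤ ·)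
  have hL : L.length = n := (P.roots.length_sort _).trans hcard
  have hroot : ∀ r, P.eval r = 0 ↔ ∃ j < n, L.getD j 0 = r := by
    intro r
    rw [← IsRoot.def, ← mem_roots hm.ne_zero, ← Multiset.mem_sort (· ≤ ·),
      List.mem_iff_getElem]
    constructor
    · rintro ⟨j, hj, rfl⟩
      exact ⟨j, hL ▸ hj, List.getD_eq_getElem _ _ hj⟩
    · rintro ⟨j, hj, rfl⟩
      exact ⟨j, hL ▸ hj, (List.getD_eq_getElem _ _ _).symm⟩
  have hgt : ∀ i < n, ∀ j < n, x i < L.getD j 0 ↔ i < j + k := fun i hi j hj => by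
    rw [Multiset.lt_getD_sort_iff _ _ _ (hcard ▸ hj), hcard,
      hP.countP_roots_gt_eq hm hdeg hx hk hsign i hi]
    omega
  have hlt : ∀ i < n, ∀ j < n, L.getD j 0 < x i ↔ j + k ≤ i := fun i hi j hj => by
    have hne : L.getD j 0 ≠ x i := fun h => (hsign i hi).ne' <| by
      rw [← h, (hroot _).2 ⟨j, hj, rfl⟩, mul_zero]
    rw [lt_iff_le_and_ne, ← not_lt, hgt i hi j hj]
    simp only [hne, ne_eq, not_false_eq_true, and_true]
    omega
  refine ⟨fun j => L.getD j 0, fun i j hij hj => ?_, hroot,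
    fun i hi j hj => ⟨hlt i hi j hj, hgt i hi j hj⟩⟩
  have hik : i + k < n := by omega
  exact ((hlt (i + k) hik i (by omega)).2 le_rfl).trans ((hgt (i + k) hik j hj).2 (by omega))

theorem Polynomial.Monic.neg_one_pow_mul_eval_pos_of_interlace {Q : R[X]} (hQ : Q.Monic)
    {n : ℕ} (hdeg : Q.natDegree = n + 1) {x y : ℕ → R} (hy : StrictMonoOn y (Set.Iic n))
    (hroots : ∀ j ≤ n, Q.eval (y j) = 0) (hyx : ∀ i < n, y i < x i)
    (hxy : ∀ i < n, x i < y (i + 1)) : ∀ i < n, 0 < (-1) ^ (n - i) * Q.eval (x i) := by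
  classical
  have hinj : Set.InjOn y (Finset.range (n + 1)) :=
    hy.injOn.mono fun j hj => by simpa [Nat.lt_succ_iff] using hj
  set S := (Finset.range (n + 1)).image y with hSdef
  have hS : S.card = n + 1 := by rw [Finset.card_image_of_injOn hinj, Finset.card_range]
  have hQS : Q.roots = S.val := roots_eq_of_natDegree_le_card_of_ne_zero
    (by simpa [S, Nat.lt_succ_iff] using hroots) (by rw [hdeg, hS]) hQ.ne_zero
  have hsplit : Q.Splits := splits_iff_card_roots.2 (by rw [hQS, Finset.card_val, hS, hdeg])
  intro i hi
  have hbelow : ∀ j ≤ i, y j < x i := fun j hj =>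
    (hy.monotoneOn (by simp; omega) (by simp; omega) hj).trans_lt (hyx i hi)
  have habove : ∀ j ≤ n, i < j → x i < y j := fun j hj hij =>
    (hxy i hi).trans_le (hy.monotoneOn (by simp; omega) (by simpa using hj) hij)
  have hnot : ¬Q.IsRoot (x i) := by
    rw [← mem_roots hQ.ne_zero, hQS]
    simp only [S, Finset.mem_val, Finset.mem_image, Finset.mem_range, not_exists, not_and]
    intro j hj hji
    rcases le_or_gt j i with h | h
    · exact (hbelow j h).ne hji
    · exact (habove j (by omega) h).ne' hji
  have hcount : Q.roots.countP (x i < ·) = n - i := by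
    rw [hQS, Multiset.countP_eq_card_filter, ← Finset.filter_val, Finset.card_val, hSdef,
      Finset.filter_image, Finset.card_image_of_injOn (hinj.mono (Finset.filter_subset _ _))]
    have : (Finset.range (n + 1)).filter (fun j => x i < y j) = Finset.Ioc i n := by
      ext j
      simp only [Finset.mem_filter, Finset.mem_range, Finset.mem_Ioc]
      refine ⟨fun ⟨hj, hxy⟩ => ⟨lt_of_not_ge fun h => (hbelow j h).not_gt hxy, by omega⟩,
        fun ⟨hij, hj⟩ => ⟨by omega, habove j hj hij⟩⟩
    rw [this, Nat.card_Ioc]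
  simpa [hcount] using hsplit.neg_one_pow_countP_roots_mul_eval_pos hQ hnot

end OrderedRing

theorem stmt_3_general (n : ℕ) (a b : EReal)
    (G Q P : Polynomial ℝ) (E : ℝ) (A B : ℝ → ℝ)
    (x y : ℕ → ℝ)
    (hPmonic : P.Monic) (hPdeg : P.natDegree = n)
    (hQmonic : Q.Monic) (hQdeg : Q.natDegree = n + 1)
    (hPreal : P.roots.card = n)
    (hx : ∀ i j : ℕ, i < j → j < n → x i < x j)
    (hy : ∀ i j : ℕ, i < j → j ≤ n → y i < y j)
    (hGroots : ∀ r : ℝ, G.eval r = 0 ↔ ∃ i < n, x i = r)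
    (hQroots : ∀ r : ℝ, Q.eval r = 0 ↔ ∃ i ≤ n, y i = r)
    (hxab : ∀ i < n, a < (x i : EReal) ∧ (x i : EReal) < b)
    (hQG1 : ∀ i < n, y i < x i)
    (hQG2 : ∀ i < n, x i < y (i + 1))
    (hApos : ∀ t : ℝ, a < (t : EReal) → (t : EReal) < b → 0 < A t)
    (hrel : ∀ t : ℝ, a < (t : EReal) → (t : EReal) < b →
        A t * P.eval t = B t * G.eval t - (t - E) * Q.eval t) :
    (E < x 0 →
      ∃ t : ℕ → ℝ, (∀ i j : ℕ, i < j → j < n → t i < t j) ∧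
        (∀ r : ℝ, P.eval r = 0 ↔ ∃ i < n, t i = r) ∧
        (∀ i < n, t i < x i) ∧ (∀ i < n - 1, x i < t (i + 1))) ∧
    (x (n - 1) < E →
      ∃ t : ℕ → ℝ, (∀ i j : ℕ, i < j → j < n → t i < t j) ∧
        (∀ r : ℝ, P.eval r = 0 ↔ ∃ i < n, t i = r) ∧
        (∀ i < n, x i < t i) ∧ (∀ i < n - 1, t i < x (i + 1))) := by
  have hxmono : StrictMonoOn x (Set.Iio n) := fun i _ j hj hij => hx i j hij hj
  have hPsplit : P.Splits := splits_iff_card_roots.2 (hPreal.trans hPdeg.symm)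
  have hQsign := hQmonic.neg_one_pow_mul_eval_pos_of_interlace hQdeg
    (fun i _ j hj hij => hy i j hij hj) (fun j hj => (hQroots _).2 ⟨j, hj, rfl⟩) hQG1 hQG2
  have hrelx : ∀ i < n, A (x i) * P.eval (x i) = (E - x i) * Q.eval (x i) := fun i hi => by
    rw [hrel _ (hxab i hi).1 (hxab i hi).2, (hGroots _).2 ⟨i, hi, rfl⟩]
    ring
  have hAx : ∀ i < n, 0 < A (x i) := fun i hi => hApos _ (hxab i hi).1 (hxab i hi).2
  have hsucc : ∀ i < n, n - 1 - i + 1 = n - i := fun i hi => by omega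
  refine ⟨fun hE => ?_, fun hE => ?_⟩
  · have hxE : ∀ i < n, E < x i := fun i hi =>
      hE.trans_le (hxmono.monotoneOn (by simp; omega) hi (Nat.zero_le i))
    obtain ⟨t, ht, hroots, hint⟩ := hPsplit.exists_roots_interlace hPmonic hPdeg hxmono
      zero_le_one fun i hi => neg_one_pow_mul_pos_of_mul_eq (q := -Q.eval (x i)) (hAx i hi)
        (sub_pos.2 (hxE i hi))
        (by have := hQsign i hi; rw [← hsucc i hi, pow_succ] at this; rw [add_zero]; linarith)
        (by rw [hrelx i hi]; ring)
    exact ⟨t, ht, hroots, fun i hi => (hint i hi i hi).1.2 le_rfl,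
      fun i hi => (hint i (by omega) (i + 1) (by omega)).2.2 (by omega)⟩
  · have hxE : ∀ i < n, x i < E := fun i hi =>
      (hxmono.monotoneOn hi (by simp; omega) (by omega)).trans_lt hE
    obtain ⟨t, ht, hroots, hint⟩ := hPsplit.exists_roots_interlace hPmonic hPdeg hxmono
      le_rfl fun i hi => neg_one_pow_mul_pos_of_mul_eq (hAx i hi) (sub_pos.2 (hxE i hi))
        (by rw [hsucc i hi]; exact hQsign i hi) (hrelx i hi)
    exact ⟨t, ht, hroots, fun i hi => (hint i hi i hi).2.2 (by omega),
      fun i hi => (hint (i + 1) (by omega) i (by omega)).1.2 le_rfl⟩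

/-- Theorem 2.3, part (2) — `G`, `P` monic of degree `n`, `Q` monic of degree
`n+1`, all zeros in the (possibly infinite) interval `(a,b)`, `Q ≺ G`, and
`A(x)P(x) = B(x)G(x) − (x−E)Q(x)` on `(a,b)` with continuous `A, B`, `A > 0` on `(a,b)`.
If `E < x_1` then `P ≺ G`; if `E > x_n` then `G ≺ P`.
Zeros of `G` are `x 0 < … < x (n-1)`; zeros of `Q` are `y 0 < … < y n`. -/
theorem stmt_3 (n : ℕ) (hn : 2 ≤ n) (a b : EReal)
    (G Q P : Polynomial ℝ) (E : ℝ) (A B : ℝ → ℝ)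
    (x y : ℕ → ℝ)
    (hGmonic : G.Monic) (hGdeg : G.natDegree = n)
    (hPmonic : P.Monic) (hPdeg : P.natDegree = n)
    (hQmonic : Q.Monic) (hQdeg : Q.natDegree = n + 1)
    (hPreal : P.roots.card = n)
    (hPab : ∀ r : ℝ, P.eval r = 0 → a < (r : EReal) ∧ (r : EReal) < b)
    (hx : ∀ i j : ℕ, i < j → j < n → x i < x j)
    (hy : ∀ i j : ℕ, i < j → j ≤ n → y i < y j)
    (hGroots : ∀ r : ℝ, G.eval r = 0 ↔ ∃ i < n, x i = r)
    (hQroots : ∀ r : ℝ, Q.eval r = 0 ↔ ∃ i ≤ n, y i = r)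
    (hxab : ∀ i < n, a < (x i : EReal) ∧ (x i : EReal) < b)
    (hyab : ∀ i ≤ n, a < (y i : EReal) ∧ (y i : EReal) < b)
    (hQG1 : ∀ i < n, y i < x i)
    (hQG2 : ∀ i < n, x i < y (i + 1))
    (hA : ContinuousOn A {t : ℝ | a < (t : EReal) ∧ (t : EReal) < b})
    (hB : ContinuousOn B {t : ℝ | a < (t : EReal) ∧ (t : EReal) < b})
    (hApos : ∀ t : ℝ, a < (t : EReal) → (t : EReal) < b → 0 < A t)
    (hrel : ∀ t : ℝ, a < (t : EReal) → (t : EReal) < b →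
        A t * P.eval t = B t * G.eval t - (t - E) * Q.eval t)
    (hBE : B E ≠ 0)
    (hcommon : ∀ r : ℝ, ¬(G.eval r = 0 ∧ P.eval r = 0)) :
    (E < x 0 →
      ∃ t : ℕ → ℝ, (∀ i j : ℕ, i < j → j < n → t i < t j) ∧
        (∀ r : ℝ, P.eval r = 0 ↔ ∃ i < n, t i = r) ∧
        (∀ i < n, t i < x i) ∧ (∀ i < n - 1, x i < t (i + 1))) ∧
    (x (n - 1) < E →
      ∃ t : ℕ → ℝ, (∀ i j : ℕ, i < j → j < n → t i < t j) ∧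
        (∀ r : ℝ, P.eval r = 0 ↔ ∃ i < n, t i = r) ∧
        (∀ i < n, x i < t i) ∧ (∀ i < n - 1, t i < x (i + 1))) :=
  stmt_3_general n a b G Q P E A B x y hPmonic hPdeg hQmonic hQdeg hPreal hx hy hGroots hQroots hxab
    hQG1 hQG2 hApos hrel
end

section
/- Let n ≥ 3, let (a,b) ⊆ ℝ be a (finite or infinite) open interval, and let G, P be monic real polynomials of degree n and Q a monic real polynomial of degree n+1, all of whose zeros are real and lie in (a,b), with the zeros of G and of Q simple. Denote the zeros of G by x_1 < ⋯ < x_n and the zeros of Q by y_1 < ⋯ < y_{n+1}, and assume Q ≺ G, i.e. y_1 < x_1 < y_2 < x_2 < ⋯ < y_n < x_n < y_{n+1}. Suppose there exist E ∈ ℝ and continuous functions A, B on (a,b) with A(x) > 0 for all x ∈ (a,b), such that A(x)P(x) = B(x)G(x) − (x−E)Q(x) for all x ∈ (a,b), with B(E) ≠ 0 and G and P having no common zero. Then at least n−2 zeros of P lie in pairwise distinct open intervals (x_k, x_{k+1}) whose endpoints are consecutive zeros of G. Moreover, if the zeros z_1 < ⋯ < z_n of P are all real and there is an index k' ∈ {1,…,n−1}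 with x_{k'} < z_{k'} < E < z_{k'+1} < x_{k'+1}, then the full interlacing x_1 < z_1 < x_2 < z_2 < ⋯ < x_{k'} < z_{k'} < E < z_{k'+1} < x_{k'+1} < ⋯ < z_n < x_n holds, i.e. (x−E)G(x) ≺ P(x). -/
/-!
At a zero `x j` of `G` the relation reads `A (x j) * P (x j) = (E - x j) * Q (x j)` with
`A (x j) > 0`, and `Q` changes sign between consecutive zeros of `G` because `Q ≺ G` puts exactly
one zero of `Q` between them. Hence `P` changes sign across every gap `(x j, x (j + 1))` that does
not contain `E`, and at most one gap contains `E`.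

For the interlacing, count the zeros of `P` below `x j`. The count grows strictly across every gap
except the `k`-th, is at most `k` at `x k`, at least `k + 2` at `x (k + 1)` and at most `n`
everywhere, so it equals `j` for `j ≤ k` and `j + 1` for `j > k`.
-/

open Polynomial Finset

theorem Polynomial.Monic.eq_prod_X_sub_C {R ι : Type*} [CommRing R] [IsDomain R] {p : R[X]}
    (hp : p.Monic) {s : Finset ι} {w : ι → R} (hw : Set.InjOn w s)
    (hroot : ∀ i ∈ s, p.IsRoot (w i)) (hdeg : p.natDegree ≤ #s) :
    p = ∏ i ∈ s, (X - C (w i)) := by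
  have hnodup : (s.val.map w).Nodup := s.nodup.map_on fun i hi j hj => hw hi hj
  have hle : s.val.map w ≤ p.roots := (Multiset.le_iff_subset hnodup).2 fun r hr => by
    obtain ⟨i, hi, rfl⟩ := Multiset.mem_map.1 hr
    exact (mem_roots hp.ne_zero).2 (hroot i hi)
  have hdvd : ∏ i ∈ s, (X - C (w i)) ∣ p := by
    have := (Multiset.prod_X_sub_C_dvd_iff_le_roots hp.ne_zero _).2 hle
    rwa [Multiset.map_map] at this
  have hmonic : (∏ i ∈ s, (X - C (w i))).Monic :=
    monic_prod_of_monic _ _ fun i _ => monic_X_sub_C _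
  refine (eq_of_dvd_of_natDegree_le_of_leadingCoeff hdvd ?_ ?_).symm
  · rwa [natDegree_prod_of_monic _ _ fun i _ => monic_X_sub_C _, sum_congr rfl fun i _ =>
      natDegree_X_sub_C (w i), sum_const, smul_eq_mul, mul_one]
  · rw [hmonic.leadingCoeff, hp.leadingCoeff]

section OrderedRing

variable {α : Type*} [CommRing α] [LinearOrder α] [IsStrictOrderedRing α]

theorem prod_sub_mul_prod_sub_neg {ι : Type*} {s : Finset ι} {y : ι → α} {u v : α} {i₀ : ι}
    (hi₀ : i₀ ∈ s) (h₀ : y i₀ ∈ Set.Ioo u v) (h : ∀ i ∈ s, i ≠ i₀ → y i < u ∨ v < y i) :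
    (∏ i ∈ s, (u - y i)) * ∏ i ∈ s, (v - y i) < 0 := by
  classical
  have huv : u ≤ v := (h₀.1.trans h₀.2).le
  rw [← prod_mul_distrib, ← mul_prod_erase s _ hi₀]
  refine mul_neg_of_neg_of_pos (mul_neg_of_neg_of_pos (sub_neg.2 h₀.1) (sub_pos.2 h₀.2))
    (prod_pos fun i hi => ?_)
  obtain ⟨hne, hi⟩ := mem_erase.1 hi
  rcases h i hi hne with hlt | hlt
  · exact mul_pos (sub_pos.2 hlt) (sub_pos.2 (hlt.trans_le huv))
  · exact mul_pos_of_neg_of_neg (sub_neg.2 (huv.trans_lt hlt)) (sub_neg.2 hlt)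

theorem mul_neg_of_mul_eq_mul {a a' p p' c c' q q' : α} (ha : 0 < a) (ha' : 0 < a')
    (h : a * p = c * q) (h' : a' * p' = c' * q') (hc : 0 < c * c') (hq : q * q' < 0) :
    p * p' < 0 := by
  have key : (a * a') * (p * p') = (c * c') * (q * q') := by
    linear_combination (a' * p') * h + (c * q) * h'
  exact neg_of_mul_neg_right (key ▸ mul_neg_of_pos_of_neg hc hq) (mul_pos ha ha').le

end OrderedRing

theorem exists_mem_Ioo_eq_zero_of_mul_neg {f : ℝ → ℝ} {u v : ℝ} (huv : u ≤ v)
    (hf : ContinuousOn f (Set.Icc u v)) (h : f u * f v < 0) : ∃ r ∈ Set.Ioo u v, f r = 0 := by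
  rcases lt_or_gt_of_ne (ne_of_apply_ne (· * f v) (by simpa using h.ne) : f u ≠ 0) with hu | hu
  · exact intermediate_value_Ioo huv hf ⟨hu, (neg_iff_pos_of_mul_neg h).1 hu⟩
  · exact intermediate_value_Ioo' huv hf ⟨(pos_iff_neg_of_mul_neg h).1 hu, hu⟩

theorem Nat.add_sub_le_of_forall_lt_succ {f : ℕ → ℕ} {a b : ℕ}
    (h : ∀ j, a ≤ j → j < b → f j < f (j + 1)) {j : ℕ} (haj : a ≤ j) (hjb : j ≤ b) :
    f a + (j - a) ≤ f j := by
  induction j, haj using Nat.le_induction with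
  | base => simp
  | succ j haj ih =>
    have := h j haj (by omega)
    have := ih (by omega)
    omega

theorem eval_mul_eval_succ_neg_of_interlace {R : Type*} [CommRing R] [LinearOrder R]
    [IsStrictOrderedRing R] {n : ℕ} {Q : R[X]} {x y : ℕ → R} (hQ : Q.Monic)
    (hQdeg : Q.natDegree = n + 1) (hy : StrictMonoOn y (Set.Iic n))
    (hQroots : ∀ i ≤ n, Q.IsRoot (y i)) (hyx : ∀ i < n, y i < x i)
    (hxy : ∀ i < n, x i < y (i + 1)) {j : ℕ} (hj : j + 1 < n) :
    Q.eval (x j) * Q.eval (x (j + 1)) < 0 := by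
  have hrange : (range (n + 1) : Set ℕ) ⊆ Set.Iic n := fun i hi => by
    simpa [Nat.lt_succ_iff] using hi
  rw [hQ.eq_prod_X_sub_C (hy.injOn.mono hrange)
    (fun i hi => hQroots i (mem_range_succ_iff.1 hi)) (by simp [hQdeg])]
  simp only [eval_prod, eval_sub, eval_X, eval_C]
  refine prod_sub_mul_prod_sub_neg (i₀ := j + 1) (mem_range.2 (by omega))
    ⟨hxy j (by omega), hyx (j + 1) hj⟩ fun i hi hne => ?_
  have hi : i ≤ n := mem_range_succ_iff.1 hi
  rcases lt_or_gt_of_ne hne with hlt | hlt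
  · exact .inl <| (hy.monotoneOn (by simpa using hi) (by simp; omega) (by omega : i ≤ j)).trans_lt
      (hyx j (by omega))
  · exact .inr <| (hxy (j + 1) hj).trans_le
      (hy.monotoneOn (by simp; omega) (by simpa using hi) (by omega : j + 2 ≤ i))

theorem exists_eval_eq_zero_of_mul_eq_mul_of_notMem_Ioo {P Q : ℝ[X]} {A : ℝ → ℝ} {E u v : ℝ}
    (huv : u ≤ v) (hAu : 0 < A u) (hAv : 0 < A v) (hu : A u * P.eval u = (E - u) * Q.eval u)
    (hv : A v * P.eval v = (E - v) * Q.eval v) (hPu : P.eval u ≠ 0) (hPv : P.eval v ≠ 0)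
    (hQ : Q.eval u * Q.eval v < 0) (hE : E ∉ Set.Ioo u v) : ∃ r ∈ Set.Ioo u v, P.eval r = 0 := by
  have hEu : E ≠ u := by rintro rfl; exact hPu (by simpa [hAu.ne'] using hu)
  have hEv : E ≠ v := by rintro rfl; exact hPv (by simpa [hAv.ne'] using hv)
  have hside : 0 < (E - u) * (E - v) := by
    rcases lt_or_gt_of_ne hEu with h | h
    · exact mul_pos_of_neg_of_neg (by linarith) (by linarith)
    · have : v < E := lt_of_le_of_ne (not_lt.1 fun h' => hE ⟨h, h'⟩) hEv.symm
      exact mul_pos (by linarith) (by linarith)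
  exact exists_mem_Ioo_eq_zero_of_mul_neg huv P.continuous.continuousOn
    (mul_neg_of_mul_eq_mul hAu hAv hu hv hside hQ)

section LinearOrder

variable {α : Type*} [LinearOrder α] {n : ℕ}

theorem eq_of_mem_Ioo_of_mem_Ioo {x : ℕ → α} (hx : MonotoneOn x (Set.Iio n)) {e : α} {i j : ℕ}
    (hi : i + 1 < n) (hj : j + 1 < n) (hei : e ∈ Set.Ioo (x i) (x (i + 1)))
    (hej : e ∈ Set.Ioo (x j) (x (j + 1))) : i = j := by
  by_contra hne
  wlog hij : i < j generalizing i j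
  · exact this hj hi hej hei (Ne.symm hne) (by omega)
  exact lt_asymm hei.2 ((hx (by simpa using hi) (by simp; omega) hij).trans_lt hej.1)

theorem card_filter_mem_Ioo_le_one {x : ℕ → α} (hx : MonotoneOn x (Set.Iio n)) (e : α) :
    #{j ∈ range (n - 1) | e ∈ Set.Ioo (x j) (x (j + 1))} ≤ 1 := by
  refine card_le_one.2 fun i hi j hj => ?_
  simp only [mem_filter, mem_range] at hi hj
  exact eq_of_mem_Ioo_of_mem_Ioo hx (by omega) (by omega) hi.2 hj.2

theorem exists_subset_range_card_ge_of_notMem_Ioo {x : ℕ → α} (hx : MonotoneOn x (Set.Iio n))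
    (e : α) {R : ℕ → Prop} (h : ∀ j, j + 1 < n → e ∉ Set.Ioo (x j) (x (j + 1)) → R j) :
    ∃ s : Finset ℕ, s ⊆ range (n - 1) ∧ n - 2 ≤ #s ∧ ∀ k ∈ s, R k := by
  classical
  refine ⟨{j ∈ range (n - 1) | R j}, filter_subset _ _, ?_, fun k hk => (mem_filter.1 hk).2⟩
  have hbad : #{j ∈ range (n - 1) | ¬R j} ≤ 1 := by
    refine (card_le_card fun j hj => ?_).trans (card_filter_mem_Ioo_le_one hx e)
    simp only [mem_filter, mem_range] at hj ⊢
    exact ⟨hj.1, not_imp_comm.1 (h j (by omega)) hj.2⟩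
  have := card_filter_add_card_filter_not (s := range (n - 1)) (p := fun j => R j)
  rw [card_range] at this
  omega

def countBelow (n : ℕ) (z : ℕ → α) (t : α) : ℕ := #{i ∈ range n | z i < t}

variable {z : ℕ → α}

theorem countBelow_le (t : α) : countBelow n z t ≤ n :=
  (card_filter_le _ _).trans (card_range n).le

theorem add_one_le_countBelow (hz : MonotoneOn z (Set.Iio n)) {i : ℕ} {t : α} (hi : i < n)
    (h : z i < t) : i + 1 ≤ countBelow n z t := by
  calc i + 1 = #(range (i + 1)) := (card_range _).symm
    _ ≤ countBelow n z t := card_le_card fun i' hi' => by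
      simp only [mem_filter, mem_range] at hi' ⊢
      exact ⟨by omega, (hz (by simp; omega) (by simpa using hi) (by omega)).trans_lt h⟩

theorem countBelow_le_of_le (hz : MonotoneOn z (Set.Iio n)) {i : ℕ} {t : α} (hi : i < n)
    (h : t ≤ z i) : countBelow n z t ≤ i := by
  calc countBelow n z t ≤ #(range i) := card_le_card fun i' hi' => by
        simp only [mem_filter, mem_range] at hi' ⊢
        by_contra hle
        have hzi : z i ≤ z i' := hz (by simpa using hi) (by simpa using hi'.1) (not_lt.1 hle)
        exact absurd hi'.2 (not_lt.2 (h.trans hzi))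
    _ = i := card_range i

theorem countBelow_lt_countBelow {s t : α} (hst : s ≤ t) {i : ℕ} (hi : i < n) (hs : s ≤ z i)
    (ht : z i < t) : countBelow n z s < countBelow n z t := by
  refine card_lt_card ((ssubset_iff_of_subset fun i' hi' => ?_).2 ⟨i, ?_, ?_⟩)
  · simp only [mem_filter] at hi' ⊢
    exact ⟨hi'.1, hi'.2.trans_le hst⟩
  · simpa using ⟨hi, ht⟩
  · simpa using fun _ => hs

theorem interlace_of_forall_exists_mem_Ioo {x : ℕ → α} (hx : MonotoneOn x (Set.Iio n))
    (hz : MonotoneOn z (Set.Iio n)) (hne : ∀ i < n, ∀ j < n, z i ≠ x j) {k : ℕ} (hk : k + 1 < n)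
    (hxz : x k < z k) (hzx : z (k + 1) < x (k + 1))
    (hgap : ∀ j, j + 1 < n → j ≠ k → ∃ i < n, z i ∈ Set.Ioo (x j) (x (j + 1))) :
    (∀ i ≤ k, x i < z i) ∧ (∀ i < k, z i < x (i + 1)) ∧
      (∀ i : ℕ, k < i → i < n → z i < x i) ∧ (∀ i : ℕ, k < i → i + 1 < n → x i < z (i + 1)) := by
  set m : ℕ → ℕ := fun j => countBelow n z (x j)
  have hstep : ∀ j, j + 1 < n → j ≠ k → m j < m (j + 1) := fun j hj hjk => by
    obtain ⟨i, hi, hzi⟩ := hgap j hj hjk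
    exact countBelow_lt_countBelow (hx (by simp; omega) (by simpa using hj) (by omega)) hi
      hzi.1.le hzi.2
  have hlow : ∀ j ≤ k, m j = j := fun j hj => by
    have h₁ := Nat.add_sub_le_of_forall_lt_succ (f := m) (fun i _ hi => hstep i (by omega) hi.ne)
      (Nat.zero_le j) hj
    have h₂ := Nat.add_sub_le_of_forall_lt_succ (f := m) (fun i _ hi => hstep i (by omega) hi.ne)
      hj le_rfl
    have h₃ : m k ≤ k := countBelow_le_of_le hz (by omega) hxz.le
    omega
  have hhigh : ∀ j, k < j → j < n → m j = j + 1 := fun j hkj hjn => by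
    have h₁ := Nat.add_sub_le_of_forall_lt_succ (f := m) (a := k + 1) (b := n - 1)
      (fun i hi _ => hstep i (by omega) (by omega)) hkj (by omega)
    have h₂ := Nat.add_sub_le_of_forall_lt_succ (f := m) (a := j) (b := n - 1)
      (fun i hi _ => hstep i (by omega) (by omega)) (by omega) le_rfl
    have h₃ : k + 1 + 1 ≤ m (k + 1) := add_one_le_countBelow hz hk hzx
    have h₄ : m (n - 1) ≤ n := countBelow_le _
    omega
  refine ⟨fun i hi => ?_, fun i hi => ?_, fun i hki hin => ?_, fun i hki hin => ?_⟩
  · refine (le_of_not_gt fun h => ?_).lt_of_ne (hne i (by omega) i (by omega)).symm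
    have : i + 1 ≤ m i := add_one_le_countBelow hz (by omega) h
    have := hlow i hi
    omega
  · refine lt_of_not_ge fun h => ?_
    have : m (i + 1) ≤ i := countBelow_le_of_le hz (by omega) h
    have := hlow (i + 1) hi
    omega
  · refine lt_of_not_ge fun h => ?_
    have : m i ≤ i := countBelow_le_of_le hz hin h
    have := hhigh i hki hin
    omega
  · refine (le_of_not_gt fun h => ?_).lt_of_ne (hne (i + 1) hin i (by omega)).symm
    have : i + 1 + 1 ≤ m i := add_one_le_countBelow hz hin h
    have := hhigh i hki (by omega)
    omega

end LinearOrder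

theorem stmt_4_general (n : ℕ) (a b : EReal)
    (G Q P : Polynomial ℝ) (E : ℝ) (A B : ℝ → ℝ)
    (x y : ℕ → ℝ)
    (hQmonic : Q.Monic) (hQdeg : Q.natDegree = n + 1)
    (hx : ∀ i j : ℕ, i < j → j < n → x i < x j)
    (hy : ∀ i j : ℕ, i < j → j ≤ n → y i < y j)
    (hGroots : ∀ r : ℝ, G.eval r = 0 ↔ ∃ i < n, x i = r)
    (hQroots : ∀ r : ℝ, Q.eval r = 0 ↔ ∃ i ≤ n, y i = r)
    (hxab : ∀ i < n, a < (x i : EReal) ∧ (x i : EReal) < b)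
    (hQG1 : ∀ i < n, y i < x i)
    (hQG2 : ∀ i < n, x i < y (i + 1))
    (hApos : ∀ t : ℝ, a < (t : EReal) → (t : EReal) < b → 0 < A t)
    (hrel : ∀ t : ℝ, a < (t : EReal) → (t : EReal) < b →
        A t * P.eval t = B t * G.eval t - (t - E) * Q.eval t)
    (hcommon : ∀ r : ℝ, ¬(G.eval r = 0 ∧ P.eval r = 0)) :
    (∃ s : Finset ℕ, s ⊆ Finset.range (n - 1) ∧ n - 2 ≤ s.card ∧
      ∀ k ∈ s, ∃ r : ℝ, P.eval r = 0 ∧ x k < r ∧ r < x (k + 1)) ∧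
    (∀ z : ℕ → ℝ, (∀ i j : ℕ, i < j → j < n → z i < z j) →
      (∀ r : ℝ, P.eval r = 0 ↔ ∃ i < n, z i = r) →
      ∀ k < n - 1, x k < z k → z k < E → E < z (k + 1) → z (k + 1) < x (k + 1) →
        (∀ i ≤ k, x i < z i) ∧ (∀ i < k, z i < x (i + 1)) ∧
        (∀ i : ℕ, k < i → i < n → z i < x i) ∧
        (∀ i : ℕ, k < i → i + 1 < n → x i < z (i + 1))) := by
  have hxmono : MonotoneOn x (Set.Iio n) :=
    StrictMonoOn.monotoneOn fun i hi j hj hij => hx i j hij hj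
  have hGx : ∀ j < n, G.eval (x j) = 0 := fun j hj => (hGroots _).2 ⟨j, hj, rfl⟩
  have hAP : ∀ j < n, A (x j) * P.eval (x j) = (E - x j) * Q.eval (x j) := fun j hj => by
    linear_combination hrel (x j) (hxab j hj).1 (hxab j hj).2 + B (x j) * hGx j hj
  have hA : ∀ j < n, 0 < A (x j) := fun j hj => hApos _ (hxab j hj).1 (hxab j hj).2
  have hroot : ∀ j, j + 1 < n → E ∉ Set.Ioo (x j) (x (j + 1)) →
      ∃ r, P.eval r = 0 ∧ x j < r ∧ r < x (j + 1) := fun j hj hE =>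
    have ⟨r, hr, hPr⟩ := exists_eval_eq_zero_of_mul_eq_mul_of_notMem_Ioo
      (hx j (j + 1) j.lt_succ_self hj).le (hA j (by omega)) (hA _ hj) (hAP j (by omega))
      (hAP _ hj) (fun h => hcommon _ ⟨hGx j (by omega), h⟩) (fun h => hcommon _ ⟨hGx _ hj, h⟩)
      (eval_mul_eval_succ_neg_of_interlace hQmonic hQdeg (fun i hi j hj hij => hy i j hij hj)
        (fun i hi => (hQroots _).2 ⟨i, hi, rfl⟩) hQG1 hQG2 hj) hE
    ⟨r, hPr, hr⟩
  refine ⟨exists_subset_range_card_ge_of_notMem_Ioo hxmono E hroot, ?_⟩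
  intro z hz hzroots k hk hxz hzE hEz hzx
  refine interlace_of_forall_exists_mem_Ioo hxmono
    (StrictMonoOn.monotoneOn fun i hi j hj hij => hz i j hij hj)
    (fun i hi j hj h => hcommon (x j) ⟨hGx j hj, h ▸ (hzroots _).2 ⟨i, hi, rfl⟩⟩) (by omega)
    hxz hzx fun j hj hjk => ?_
  obtain ⟨r, hPr, hr⟩ := hroot j hj fun hE =>
    hjk (eq_of_mem_Ioo_of_mem_Ioo hxmono hj (by omega) hE ⟨hxz.trans hzE, hEz.trans hzx⟩)
  obtain ⟨i, hi, rfl⟩ := (hzroots r).1 hPr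
  exact ⟨i, hi, hr⟩

/-- Theorem 2.3 — same setup as Statement 3 (`Q` of degree `n+1`, `Q ≺ G`,
`A(x)P(x) = B(x)G(x) − (x−E)Q(x)` on `(a,b)`). Then at least `n−2` zeros of `P` lie in
pairwise distinct intervals with endpoints consecutive zeros of `G`; and if the zeros
`z 0 < … < z (n-1)` of `P` are real and `x k < z k < E < z (k+1) < x (k+1)` for some
`k < n−1`, then the full interlacing `(x−E)G(x) ≺ P(x)` holds. -/
theorem stmt_4 (n : ℕ) (hn : 3 ≤ n) (a b : EReal)
    (G Q P : Polynomial ℝ) (E : ℝ) (A B : ℝ → ℝ)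
    (x y : ℕ → ℝ)
    (hGmonic : G.Monic) (hGdeg : G.natDegree = n)
    (hPmonic : P.Monic) (hPdeg : P.natDegree = n)
    (hQmonic : Q.Monic) (hQdeg : Q.natDegree = n + 1)
    (hPreal : P.roots.card = n)
    (hPab : ∀ r : ℝ, P.eval r = 0 → a < (r : EReal) ∧ (r : EReal) < b)
    (hx : ∀ i j : ℕ, i < j → j < n → x i < x j)
    (hy : ∀ i j : ℕ, i < j → j ≤ n → y i < y j)
    (hGroots : ∀ r : ℝ, G.eval r = 0 ↔ ∃ i < n, x i = r)
    (hQroots : ∀ r : ℝ, Q.eval r = 0 ↔ ∃ i ≤ n, y i = r)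
    (hxab : ∀ i < n, a < (x i : EReal) ∧ (x i : EReal) < b)
    (hyab : ∀ i ≤ n, a < (y i : EReal) ∧ (y i : EReal) < b)
    (hQG1 : ∀ i < n, y i < x i)
    (hQG2 : ∀ i < n, x i < y (i + 1))
    (hA : ContinuousOn A {t : ℝ | a < (t : EReal) ∧ (t : EReal) < b})
    (hB : ContinuousOn B {t : ℝ | a < (t : EReal) ∧ (t : EReal) < b})
    (hApos : ∀ t : ℝ, a < (t : EReal) → (t : EReal) < b → 0 < A t)
    (hrel : ∀ t : ℝ, a < (t : EReal) → (t : EReal) < b →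
        A t * P.eval t = B t * G.eval t - (t - E) * Q.eval t)
    (hBE : B E ≠ 0)
    (hcommon : ∀ r : ℝ, ¬(G.eval r = 0 ∧ P.eval r = 0)) :
    (∃ s : Finset ℕ, s ⊆ Finset.range (n - 1) ∧ n - 2 ≤ s.card ∧
      ∀ k ∈ s, ∃ r : ℝ, P.eval r = 0 ∧ x k < r ∧ r < x (k + 1)) ∧
    (∀ z : ℕ → ℝ, (∀ i j : ℕ, i < j → j < n → z i < z j) →
      (∀ r : ℝ, P.eval r = 0 ↔ ∃ i < n, z i = r) →
      ∀ k < n - 1, x k < z k → z k < E → E < z (k + 1) → z (k + 1) < x (k + 1) →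
        (∀ i ≤ k, x i < z i) ∧ (∀ i < k, z i < x (i + 1)) ∧
        (∀ i : ℕ, k < i → i < n → z i < x i) ∧
        (∀ i : ℕ, k < i → i + 1 < n → x i < z (i + 1))) :=
  stmt_4_general n a b G Q P E A B x y hQmonic hQdeg hx hy hGroots hQroots hxab hQG1 hQG2 hApos hrel
    hcommon
end

section
/- Let 0 < p < 1 and let n, N be integers with 0 ≤ n and n+1 ≤ N. Then the monic Krawtchouk polynomials satisfy the polynomial identity in x: p(1−p)(n+1)(N+1−n)·K_n(x; p, N+1) = (N+1−x)·K_{n+1}(x; p, N) + (x − (N+1) + p(n+1))·K_{n+1}(x; p, N+1). -/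
open Polynomial

/-- The monic Krawtchouk polynomial
`K_n(x; p, N) = Σ_{k=0}^{n} C(n,k) (−p)^{n−k} ((N−k)!/(N−n)!) ∏_{j=0}^{k−1}(x−j)`. -/
noncomputable def krawtchouk (p : ℝ) (n N : ℕ) : Polynomial ℝ :=
  ∑ k ∈ Finset.range (n + 1),
    Polynomial.C ((n.choose k : ℝ) * (-p) ^ (n - k) *
        (((N - k).factorial / (N - n).factorial : ℕ) : ℝ)) *
      ∏ j ∈ Finset.range k, (Polynomial.X - Polynomial.C (j : ℝ))

noncomputable def FF (k : ℕ) : Polynomial ℝ := ∏ j ∈ Finset.range k, (X - C (j:ℝ))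

noncomputable def cf (p : ℝ) (n N k : ℕ) : ℝ :=
  (n.choose k : ℝ) * (-p) ^ (n - k) * ((N - k).factorial : ℝ) / ((N - n).factorial : ℝ)

noncomputable def shc (p : ℝ) (n N : ℕ) : ℕ → ℝ
  | 0 => 0
  | j+1 => cf p (n+1) (N+1) j - cf p (n+1) N j

lemma cf_zero (p : ℝ) (n N k : ℕ) (h : n < k) : cf p n N k = 0 := by
  simp [cf, Nat.choose_eq_zero_of_lt h]

lemma kraw_eq (p : ℝ) (n N m : ℕ) (hnN : n ≤ N) (hm : n + 1 ≤ m) :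
    krawtchouk p n N = ∑ k ∈ Finset.range m, C (cf p n N k) * FF k := by
  rw [krawtchouk,
    Finset.sum_subset (Finset.range_subset_range.2 hm)
      (fun k _ hk => by
        have : n < k := by simp [Nat.lt_succ_iff] at hk; omega
        simp [Nat.choose_eq_zero_of_lt this])]
  refine Finset.sum_congr rfl fun k _ => ?_
  by_cases hk' : k ≤ n
  · have hdvd : (N - n).factorial ∣ (N - k).factorial :=
      Nat.factorial_dvd_factorial (by omega)
    rw [Nat.cast_div hdvd (by exact_mod_cast (Nat.factorial_pos _).ne')]
    rw [cf, FF, mul_div_assoc]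
  · have h : n < k := by omega
    rw [cf_zero _ _ _ _ h]
    simp [Nat.choose_eq_zero_of_lt h]

lemma FF_succ (k : ℕ) : FF (k+1) = FF k * (X - C (k:ℝ)) := Finset.prod_range_succ _ _

lemma mul1 (a β : ℝ) (k : ℕ) :
    (C β - X) * (C a * FF k) = C (a * (β - (k:ℝ))) * FF k - C a * FF (k+1) := by
  rw [FF_succ]; simp only [map_mul, map_sub]; ring

lemma mul2 (b β γ : ℝ) (k : ℕ) :
    (X - C β + C γ) * (C b * FF k)
      = C (b * ((k:ℝ) - β + γ)) * FF k + C b * FF (k+1) := by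
  rw [FF_succ]; simp only [map_mul, map_sub, map_add]; ring

lemma key0 (p : ℝ) (n m : ℕ) :
    p * (1 - p) * ((n:ℝ)+1) * (((n+1+m:ℕ):ℝ)+1-(n:ℝ)) * cf p n (n+1+m+1) 0
    = cf p (n+1) (n+1+m) 0 * ((((n+1+m:ℕ):ℝ)+1) - ((0:ℕ):ℝ))
        + cf p (n+1) (n+1+m+1) 0 * (((0:ℕ):ℝ) - (((n+1+m:ℕ):ℝ)+1) + p*((n:ℝ)+1)) := by
  unfold cf
  rw [show n+1+m+1 - 0 = (n+m+1)+1 by omega, show n+1+m+1 - n = m+1+1 by omega,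
      show n+1+m - 0 = n+m+1 by omega, show n+1+m - (n+1) = m by omega,
      show n+1+m+1 - (n+1) = m+1 by omega, show n - 0 = n by omega,
      show n+1-0 = n+1 by omega]
  simp only [Nat.choose_zero_right, Nat.factorial_succ, Nat.cast_one]
  push_cast
  have h1 : ((n+m).factorial : ℝ) ≠ 0 := Nat.cast_ne_zero.2 (Nat.factorial_pos _).ne'
  have h2 : ((m).factorial : ℝ) ≠ 0 := Nat.cast_ne_zero.2 (Nat.factorial_pos _).ne'
  field_simp
  ring

lemma keymid (p : ℝ) (j d m : ℕ) :
    p * (1 - p) * (((j+1+d:ℕ):ℝ)+1) * (((j+1+d+1+m:ℕ):ℝ)+1-((j+1+d:ℕ):ℝ))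
        * cf p (j+1+d) (j+1+d+1+m+1) (j+1)
    = (cf p (j+1+d+1) (j+1+d+1+m) (j+1) * ((((j+1+d+1+m:ℕ):ℝ)+1) - ((j+1:ℕ):ℝ))
        + cf p (j+1+d+1) (j+1+d+1+m+1) (j+1)
            * (((j+1:ℕ):ℝ) - (((j+1+d+1+m:ℕ):ℝ)+1) + p*(((j+1+d:ℕ):ℝ)+1)))
      + (cf p (j+1+d+1) (j+1+d+1+m+1) j - cf p (j+1+d+1) (j+1+d+1+m) j) := by
  unfold cf
  rw [Nat.cast_choose ℝ (show j+1 ≤ j+1+d by omega),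
      Nat.cast_choose ℝ (show j+1 ≤ j+1+d+1 by omega),
      Nat.cast_choose ℝ (show j ≤ j+1+d+1 by omega)]
  rw [show j+1+d - (j+1) = d by omega,
      show j+1+d+1 - (j+1) = d+1 by omega,
      show j+1+d+1 - j = d+1+1 by omega,
      show j+1+d+1+m+1 - (j+1) = d+m+1+1 by omega,
      show j+1+d+1+m - (j+1) = d+m+1 by omega,
      show j+1+d+1+m+1 - (j+1+d) = m+1+1 by omega,
      show j+1+d+1+m - (j+1+d+1) = m by omega,
      show j+1+d+1+m+1 - (j+1+d+1) = m+1 by omega,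
      show j+1+d+1+m+1 - j = d+m+1+1+1 by omega,
      show j+1+d+1+m - j = d+m+1+1 by omega,
      show j+1+d = j+d+1 by omega]
  simp only [Nat.factorial_succ]
  push_cast
  have h1 : ((j+d).factorial : ℝ) ≠ 0 := Nat.cast_ne_zero.2 (Nat.factorial_pos _).ne'
  have h2 : ((d+m).factorial : ℝ) ≠ 0 := Nat.cast_ne_zero.2 (Nat.factorial_pos _).ne'
  have h3 : (m.factorial : ℝ) ≠ 0 := Nat.cast_ne_zero.2 (Nat.factorial_pos _).ne'
  have h4 : (d.factorial : ℝ) ≠ 0 := Nat.cast_ne_zero.2 (Nat.factorial_pos _).ne'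
  have h5 : (j.factorial : ℝ) ≠ 0 := Nat.cast_ne_zero.2 (Nat.factorial_pos _).ne'
  field_simp
  ring

lemma keytop (p : ℝ) (n m : ℕ) :
    p * (1 - p) * ((n:ℝ)+1) * (((n+1+m:ℕ):ℝ)+1-(n:ℝ)) * cf p n (n+1+m+1) (n+1)
    = (cf p (n+1) (n+1+m) (n+1) * ((((n+1+m:ℕ):ℝ)+1) - ((n+1:ℕ):ℝ))
        + cf p (n+1) (n+1+m+1) (n+1)
            * (((n+1:ℕ):ℝ) - (((n+1+m:ℕ):ℝ)+1) + p*((n:ℝ)+1)))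
      + (cf p (n+1) (n+1+m+1) n - cf p (n+1) (n+1+m) n) := by
  rw [cf_zero _ _ _ _ (by omega)]
  unfold cf
  rw [Nat.choose_self, Nat.choose_succ_self_right,
      show n+1 - (n+1) = 0 by omega,
      show n+1 - n = 1 by omega,
      show n+1+m - (n+1) = m by omega,
      show n+1+m+1 - (n+1) = m+1 by omega,
      show n+1+m+1 - n = m+1+1 by omega,
      show n+1+m - n = m+1 by omega]
  simp only [Nat.factorial_succ, pow_zero, pow_one, Nat.cast_one]
  push_cast
  have h3 : (m.factorial : ℝ) ≠ 0 := Nat.cast_ne_zero.2 (Nat.factorial_pos _).ne'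
  field_simp
  ring

lemma keyhigh (p : ℝ) (n m j : ℕ) (hj : n + 1 ≤ j) :
    p * (1 - p) * ((n:ℝ)+1) * (((n+1+m:ℕ):ℝ)+1-(n:ℝ)) * cf p n (n+1+m+1) (j+1)
    = (cf p (n+1) (n+1+m) (j+1) * ((((n+1+m:ℕ):ℝ)+1) - ((j+1:ℕ):ℝ))
        + cf p (n+1) (n+1+m+1) (j+1)
            * (((j+1:ℕ):ℝ) - (((n+1+m:ℕ):ℝ)+1) + p*((n:ℝ)+1)))
      + (cf p (n+1) (n+1+m+1) j - cf p (n+1) (n+1+m) j) := by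
  rw [cf_zero _ _ _ _ (by omega), cf_zero p (n+1) (n+1+m) (j+1) (by omega),
      cf_zero p (n+1) (n+1+m+1) (j+1) (by omega)]
  rcases eq_or_lt_of_le hj with h | h
  · subst h
    unfold cf
    rw [Nat.choose_self,
        show n+1+m - (n+1) = m by omega,
        show n+1+m+1 - (n+1) = m+1 by omega,
        show n+1 - (n+1) = 0 by omega]
    have h1 : ((m+1).factorial : ℝ) ≠ 0 := Nat.cast_ne_zero.2 (Nat.factorial_pos _).ne'
    have h2 : (m.factorial : ℝ) ≠ 0 := Nat.cast_ne_zero.2 (Nat.factorial_pos _).ne'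
    simp [div_self h1, div_self h2]
  · rw [cf_zero p (n+1) (n+1+m+1) j (by omega), cf_zero p (n+1) (n+1+m) j (by omega)]
    ring

lemma key (p : ℝ) (n N : ℕ) (hnN : n + 1 ≤ N) (k : ℕ) :
    p * (1 - p) * ((n:ℝ)+1) * ((N:ℝ)+1-(n:ℝ)) * cf p n (N+1) k
    = (cf p (n+1) N k * (((N:ℝ)+1) - (k:ℝ))
       + cf p (n+1) (N+1) k * ((k:ℝ) - ((N:ℝ)+1) + p*((n:ℝ)+1)))
      + shc p n N k := by
  obtain ⟨m, rfl⟩ : ∃ m, N = n+1+m := ⟨N-(n+1), by omega⟩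
  rcases k with _ | j
  · simpa [shc] using key0 p n m
  · rcases le_or_gt (j+1) n with h | h
    · obtain ⟨d, rfl⟩ : ∃ d, n = j+1+d := ⟨n-(j+1), by omega⟩
      simpa [shc] using keymid p j d m
    · rcases eq_or_lt_of_le (show n ≤ j by omega) with h2 | h2
      · subst h2
        simpa [shc] using keytop p n m
      · simpa [shc] using keyhigh p n m j (by omega)

/-- the mixed recurrence relation for monic Krawtchouk polynomials:
`p(1−p)(n+1)(N+1−n)·K_n(x;p,N+1) = (N+1−x)·K_{n+1}(x;p,N) + (x−(N+1)+p(n+1))·K_{n+1}(x;p,N+1)`. -/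
theorem stmt_5 (p : ℝ) (hp0 : 0 < p) (hp1 : p < 1) (n N : ℕ) (hnN : n + 1 ≤ N) :
    Polynomial.C (p * (1 - p) * ((n : ℝ) + 1) * ((N : ℝ) + 1 - (n : ℝ))) *
        krawtchouk p n (N + 1)
      = (Polynomial.C ((N : ℝ) + 1) - Polynomial.X) * krawtchouk p (n + 1) N +
        (Polynomial.X - Polynomial.C ((N : ℝ) + 1) + Polynomial.C (p * ((n : ℝ) + 1))) *
          krawtchouk p (n + 1) (N + 1) := by
  rw [kraw_eq p n (N+1) (n+4) (by omega) (by omega),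
      kraw_eq p (n+1) N (n+3) (by omega) (by omega),
      kraw_eq p (n+1) (N+1) (n+3) (by omega) (by omega),
      Finset.mul_sum, Finset.mul_sum, Finset.mul_sum]
  have e2 : ∑ k ∈ Finset.range (n+3),
        (C ((N:ℝ)+1) - X) * (C (cf p (n+1) N k) * FF k)
      = ∑ k ∈ Finset.range (n+3),
          (C (cf p (n+1) N k * (((N:ℝ)+1) - (k:ℝ))) * FF k
            - C (cf p (n+1) N k) * FF (k+1)) :=
    Finset.sum_congr rfl fun k _ => mul1 _ _ _
  have e3 : ∑ k ∈ Finset.range (n+3),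
        (X - C ((N:ℝ)+1) + C (p*((n:ℝ)+1))) * (C (cf p (n+1) (N+1) k) * FF k)
      = ∑ k ∈ Finset.range (n+3),
          (C (cf p (n+1) (N+1) k * ((k:ℝ) - ((N:ℝ)+1) + p*((n:ℝ)+1))) * FF k
            + C (cf p (n+1) (N+1) k) * FF (k+1)) :=
    Finset.sum_congr rfl fun k _ => mul2 _ _ _ _
  rw [e2, e3, Finset.sum_sub_distrib, Finset.sum_add_distrib]
  have e1 : ∑ k ∈ Finset.range (n+4),
        C (p * (1 - p) * ((n:ℝ) + 1) * ((N:ℝ) + 1 - (n:ℝ))) * (C (cf p n (N+1) k) * FF k)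
      = (∑ k ∈ Finset.range (n+4),
            C (cf p (n+1) N k * (((N:ℝ)+1) - (k:ℝ))) * FF k
          + ∑ k ∈ Finset.range (n+4),
            C (cf p (n+1) (N+1) k * ((k:ℝ) - ((N:ℝ)+1) + p*((n:ℝ)+1))) * FF k)
        + ∑ k ∈ Finset.range (n+4), C (shc p n N k) * FF k := by
    rw [← Finset.sum_add_distrib, ← Finset.sum_add_distrib]
    refine Finset.sum_congr rfl fun k _ => ?_
    rw [← mul_assoc, ← C_mul, key p n N hnN k, map_add, map_add, add_mul, add_mul]
  rw [e1]
  have t1 : ∑ k ∈ Finset.range (n+4), C (cf p (n+1) N k * (((N:ℝ)+1) - (k:ℝ))) * FF k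
      = ∑ k ∈ Finset.range (n+3), C (cf p (n+1) N k * (((N:ℝ)+1) - (k:ℝ))) * FF k := by
    rw [Finset.sum_range_succ, cf_zero p (n+1) N (n+3) (by omega)]
    simp
  have t2 : ∑ k ∈ Finset.range (n+4),
        C (cf p (n+1) (N+1) k * ((k:ℝ) - ((N:ℝ)+1) + p*((n:ℝ)+1))) * FF k
      = ∑ k ∈ Finset.range (n+3),
        C (cf p (n+1) (N+1) k * ((k:ℝ) - ((N:ℝ)+1) + p*((n:ℝ)+1))) * FF k := by
    rw [Finset.sum_range_succ, cf_zero p (n+1) (N+1) (n+3) (by omega)]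
    simp
  have t3 : ∑ k ∈ Finset.range (n+4), C (shc p n N k) * FF k
      = ∑ k ∈ Finset.range (n+3), C (cf p (n+1) (N+1) k) * FF (k+1)
        - ∑ k ∈ Finset.range (n+3), C (cf p (n+1) N k) * FF (k+1) := by
    rw [Finset.sum_range_succ', ← Finset.sum_sub_distrib]
    simp only [shc, map_sub, sub_mul, FF]
    simp
  rw [t1, t2, t3]
  abel
end

section
/- Let t > 0, 0 < w < 1, and n ≥ 0 an integer. Then the monic Meixner polynomials satisfy the polynomial identity in x: (x+t)·M_{n+1}(x; t+1, w) = M_{n+2}(x; t, w) − ((n+t+1)/(w−1))·M_{n+1}(x; t, w). -/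
open Polynomial

/-- The monic Meixner polynomial
`M_n(x; t, w) = Σ_{k=0}^{n} C(n,k) (t+k)_{n−k} (w/(w−1))^{n−k} ∏_{j=0}^{k−1}(x−j)`. -/
noncomputable def meixner (t w : ℝ) (n : ℕ) : Polynomial ℝ :=
  ∑ k ∈ Finset.range (n + 1),
    Polynomial.C ((n.choose k : ℝ) * (ascPochhammer ℝ (n - k)).eval (t + (k : ℝ)) *
        (w / (w - 1)) ^ (n - k)) *
      ∏ j ∈ Finset.range k, (Polynomial.X - Polynomial.C (j : ℝ))

/-! With `q = w / (w - 1)` one has `1 / (w - 1) = q - 1`, and the identity holds for arbitrary `t`, `q`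
in any commutative ring. Writing `M_n = ∑_{k + r = n} C(n,k) (t+k)_r q^r ∏_{j<k} (X - j)`, Pascal's rule
splits `M_{n+1}`, and `(X + t) ∏_{j<k} (X - j) = ∏_{j<k+1} (X - j) + (t + k) ∏_{j<k} (X - j)` reduces
the claim termwise to `(t+k)_{r+1} = (t+k) (t+k+1)_r = (t+k)_r (t+k+r)`. -/

open Finset

lemma ascPochhammer_succ_eval_left {S : Type*} [CommSemiring S] (r : ℕ) (x : S) :
    (ascPochhammer S (r + 1)).eval x = x * (ascPochhammer S r).eval (x + 1) := by
  simp [ascPochhammer_succ_left, eval_comp]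

namespace Meixner

variable {R : Type*} [CommRing R]

lemma X_add_C_mul_prod_range (t : R) (k : ℕ) :
    (X + C t) * ∏ j ∈ range k, (X - C (j : R)) =
      ∏ j ∈ range (k + 1), (X - C (j : R)) + C (t + k) * ∏ j ∈ range k, (X - C (j : R)) := by
  rw [prod_range_succ, C_add]
  ring

noncomputable def term (t q : R) (k r : ℕ) : R[X] :=
  C ((ascPochhammer R r).eval (t + k) * q ^ r) * ∏ j ∈ range k, (X - C (j : R))

/-- `M_n(x; t, w)` is `poly t (w / (w - 1)) n`: the index `k` of the paper's sum becomes the pair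
`(k, n - k)` of the antidiagonal, which avoids truncated subtraction. -/
noncomputable def poly (t q : R) (n : ℕ) : R[X] :=
  ∑ p ∈ antidiagonal n, (n.choose p.1 : R[X]) * term t q p.1 p.2

lemma term_succ_right_add_term_succ_left (t q : R) (k r : ℕ) :
    term t q k (r + 1) + term t q (k + 1) r =
      (X + C t) * term (t + 1) q k r + C ((t + (k + r)) * (q - 1)) * term t q k r := by
  have hleft := ascPochhammer_succ_eval_left r (t + k)
  have hright := ascPochhammer_succ_eval r (t + k)
  simp only [term, mul_left_comm (X + C t), X_add_C_mul_prod_range]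
  rw [show t + 1 + (k : R) = t + k + 1 by ring]
  push_cast
  rw [show t + ((k : R) + 1) = t + k + 1 by ring]
  generalize ∏ j ∈ range k, (X - C (j : R)) = P
  have h₁ := congrArg C hleft
  have h₂ := congrArg C hright
  simp only [map_mul, map_add, map_sub, map_pow, map_natCast, map_one] at h₁ h₂ ⊢
  linear_combination (C q ^ r * P) * h₁ + (C q ^ r * (C q - 1) * P) * h₂

lemma poly_succ (t q : R) (n : ℕ) :
    poly t q (n + 1) = (X + C t) * poly (t + 1) q n + C ((t + n) * (q - 1)) * poly t q n := by
  rw [poly, sum_antidiagonal_choose_succ_mul, poly, poly, mul_sum, mul_sum, ← sum_add_distrib,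
    ← sum_add_distrib]
  refine sum_congr rfl fun ⟨k, r⟩ hkr => ?_
  obtain rfl : k + r = n := HasAntidiagonal.mem_antidiagonal.mp hkr
  rw [← Nat.choose_symm_add, ← mul_add, term_succ_right_add_term_succ_left]
  push_cast
  ring

end Meixner

open Meixner

lemma meixner_eq_poly (t w : ℝ) (n : ℕ) : meixner t w n = poly t (w / (w - 1)) n := by
  rw [poly, Nat.sum_antidiagonal_eq_sum_range_succ_mk]
  refine sum_congr rfl fun k _ => ?_
  rw [term, ← C_eq_natCast, ← mul_assoc, ← C_mul, ← mul_assoc]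

theorem stmt_9_general (t w : ℝ) (hw1 : w < 1) (n : ℕ) :
    (Polynomial.X + Polynomial.C t) * meixner (t + 1) w (n + 1)
      = meixner t w (n + 2) -
        Polynomial.C (((n : ℝ) + t + 1) / (w - 1)) * meixner t w (n + 1) := by
  have hw : w - 1 ≠ 0 := sub_ne_zero.mpr hw1.ne
  have hcoeff : ((n : ℝ) + t + 1) / (w - 1) = (t + (n + 1 : ℕ)) * (w / (w - 1) - 1) := by
    push_cast
    field_simp
    ring
  rw [meixner_eq_poly, meixner_eq_poly, meixner_eq_poly, poly_succ t _ (n + 1), hcoeff]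
  ring

/-- the Christoffel-transform relation for monic Meixner polynomials:
`(x+t)·M_{n+1}(x;t+1,w) = M_{n+2}(x;t,w) − ((n+t+1)/(w−1))·M_{n+1}(x;t,w)`. -/
theorem stmt_9 (t w : ℝ) (ht : 0 < t) (hw0 : 0 < w) (hw1 : w < 1) (n : ℕ) :
    (Polynomial.X + Polynomial.C t) * meixner (t + 1) w (n + 1)
      = meixner t w (n + 2) -
        Polynomial.C (((n : ℝ) + t + 1) / (w - 1)) * meixner t w (n + 1) :=
  stmt_9_general t w hw1 n
end

section
/- For every integer n ≥ 2, the reduced Narayana polynomials satisfy the polynomial identity (n+2)·𝒩_{n+1}(x) = (2n+1)(x+1)·𝒩_n(x) − (n−1)(x−1)^2·𝒩_{n−1}(x). -/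
open Polynomial

/-- The Narayana numbers `c_{n,k} = (1/n) C(n,k) C(n,k−1)` (for `1 ≤ k ≤ n`). -/
noncomputable def narayanaNum (n k : ℕ) : ℝ :=
  (n.choose k : ℝ) * (n.choose (k - 1) : ℝ) / (n : ℝ)

/-- The reduced Narayana polynomial `𝒩_n(x) = N_n(x)/x = Σ_{j=0}^{n−1} c_{n,j+1} x^j`. -/
noncomputable def redNarayana (n : ℕ) : Polynomial ℝ :=
  ∑ j ∈ Finset.range n, Polynomial.C (narayanaNum n (j + 1)) * Polynomial.X ^ j

lemma coeff_red (n j : ℕ) : (redNarayana n).coeff j = narayanaNum n (j + 1) := by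
  rw [redNarayana, Polynomial.finset_sum_coeff]
  simp only [Polynomial.coeff_C_mul, Polynomial.coeff_X_pow, mul_ite, mul_one, mul_zero]
  rw [Finset.sum_ite_eq (Finset.range n) j]
  split_ifs with h
  · rfl
  · have : n < j + 1 := by simp at h; omega
    simp [narayanaNum, Nat.choose_eq_zero_of_lt this]

lemma ratio (M k : ℕ) : (M.choose k : ℝ) * ((M : ℝ) - k) = M.choose (k + 1) * (k + 1) := by
  rcases le_or_gt k M with h | h
  · have h1 := Nat.choose_succ_right_eq M k
    have := congrArg (Nat.cast : ℕ → ℝ) h1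
    push_cast [Nat.cast_sub h] at this
    linarith
  · rw [Nat.choose_eq_zero_of_lt h, Nat.choose_eq_zero_of_lt (h.trans (Nat.lt_succ_self k))]
    push_cast; ring

lemma cXmul (p : Polynomial ℝ) (j : ℕ) :
    (Polynomial.X * p).coeff j = if 1 ≤ j then p.coeff (j - 1) else 0 := by
  rw [mul_comm]
  simpa using Polynomial.coeff_mul_X_pow' p 1 j

lemma cX2mul (p : Polynomial ℝ) (j : ℕ) :
    (Polynomial.X ^ 2 * p).coeff j = if 2 ≤ j then p.coeff (j - 2) else 0 := by
  rw [mul_comm]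
  exact Polynomial.coeff_mul_X_pow' p 2 j

set_option maxHeartbeats 2000000 in
/-- the three-term recurrence for reduced Narayana polynomials:
`(n+2)·𝒩_{n+1}(x) = (2n+1)(x+1)·𝒩_n(x) − (n−1)(x−1)²·𝒩_{n−1}(x)` for `n ≥ 2`. -/
theorem stmt_11 (n : ℕ) (hn : 2 ≤ n) :
    Polynomial.C ((n : ℝ) + 2) * redNarayana (n + 1)
      = Polynomial.C (2 * (n : ℝ) + 1) * (Polynomial.X + 1) * redNarayana n -
        Polynomial.C ((n : ℝ) - 1) * (Polynomial.X - 1) ^ 2 * redNarayana (n - 1) := by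
  obtain ⟨m, rfl⟩ : ∃ m, n = m + 2 := ⟨n - 2, by omega⟩
  have e1 : Polynomial.C (2 * ((m : ℝ) + 2) + 1) * (Polynomial.X + 1) * redNarayana (m + 2)
      = Polynomial.C (2 * ((m : ℝ) + 2) + 1) * (Polynomial.X * redNarayana (m + 2))
        + Polynomial.C (2 * ((m : ℝ) + 2) + 1) * redNarayana (m + 2) := by ring
  have e2 : Polynomial.C (((m : ℝ) + 2) - 1) * (Polynomial.X - 1) ^ 2 * redNarayana (m + 2 - 1)
      = Polynomial.C (((m : ℝ) + 2) - 1) * (Polynomial.X ^ 2 * redNarayana (m + 1))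
        - 2 * (Polynomial.C (((m : ℝ) + 2) - 1) * (Polynomial.X * redNarayana (m + 1)))
        + Polynomial.C (((m : ℝ) + 2) - 1) * redNarayana (m + 1) := by
    norm_num
    ring
  push_cast at e1 e2 ⊢
  rw [e1, e2]
  ext j
  simp only [Polynomial.coeff_add, Polynomial.coeff_sub, Polynomial.coeff_C_mul, cXmul, cX2mul,
    coeff_red, Polynomial.coeff_ofNat_mul]
  match j with
  | 0 =>
    norm_num [narayanaNum]
    field_simp
    ring
  | 1 =>
    norm_num [narayanaNum]
    have h2a := ratio (m + 3) 1
    have h2b := ratio (m + 2) 1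
    have h2c := ratio (m + 1) 1
    simp only [Nat.choose_one_right] at h2a h2b h2c
    push_cast at h2a h2b h2c
    rw [show m + 2 + 1 = m + 3 from by omega]
    have vA : (((m + 3).choose 2 : ℕ) : ℝ) = ((m : ℝ) + 3) * ((m : ℝ) + 2) / 2 := by
      linarith
    have vB : (((m + 2).choose 2 : ℕ) : ℝ) = ((m : ℝ) + 2) * ((m : ℝ) + 1) / 2 := by
      linarith
    have vC : (((m + 1).choose 2 : ℕ) : ℝ) = ((m : ℝ) + 1) * (m : ℝ) / 2 := by
      linarith
    rw [vA, vB, vC]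
    field_simp
    ring
  | (i + 2) =>
    norm_num [narayanaNum]
    rw [show m + 2 + 1 = m + 3 from by omega, show i + 2 + 1 = i + 3 from by omega,
      show i + 1 + 1 = i + 2 from by omega]
    have r1 := ratio (m + 1) i
    have r2 := ratio (m + 1) (i + 1)
    have r3 := ratio (m + 1) (i + 2)
    push_cast at r1 r2 r3
    set A := (((m + 1).choose i : ℕ) : ℝ) with hA
    set B := (((m + 1).choose (i + 1) : ℕ) : ℝ) with hBdef
    set C := (((m + 1).choose (i + 2) : ℕ) : ℝ) with hCdef
    set D := (((m + 1).choose (i + 3) : ℕ) : ℝ) with hDdef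
    have p1 : (m + 2).choose (i + 1) = (m + 1).choose i + (m + 1).choose (i + 1) :=
      Nat.choose_succ_succ (m + 1) i
    have p2 : (m + 2).choose (i + 2) = (m + 1).choose (i + 1) + (m + 1).choose (i + 2) :=
      Nat.choose_succ_succ (m + 1) (i + 1)
    have p3 : (m + 2).choose (i + 3) = (m + 1).choose (i + 2) + (m + 1).choose (i + 3) :=
      Nat.choose_succ_succ (m + 1) (i + 2)
    have p4 : (m + 3).choose (i + 2) = (m + 2).choose (i + 1) + (m + 2).choose (i + 2) :=
      Nat.choose_succ_succ (m + 2) (i + 1)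
    have p5 : (m + 3).choose (i + 3) = (m + 2).choose (i + 2) + (m + 2).choose (i + 3) :=
      Nat.choose_succ_succ (m + 2) (i + 2)
    have hP1 : (((m + 2).choose (i + 1) : ℕ) : ℝ) = A + B := by rw [p1]; push_cast; ring
    have hP2 : (((m + 2).choose (i + 2) : ℕ) : ℝ) = B + C := by rw [p2]; push_cast; ring
    have hP3 : (((m + 2).choose (i + 3) : ℕ) : ℝ) = C + D := by rw [p3]; push_cast; ring
    have hP4 : (((m + 3).choose (i + 2) : ℕ) : ℝ) = A + 2 * B + C := by
      rw [p4, p1, p2]; push_cast; ring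
    have hP5 : (((m + 3).choose (i + 3) : ℕ) : ℝ) = B + 2 * C + D := by
      rw [p5, p2, p3]; push_cast; ring
    rw [hP1, hP2, hP3, hP4, hP5]
    have hB : B = A * ((m : ℝ) + 1 - (i : ℝ)) / ((i : ℝ) + 1) := by
      rw [eq_div_iff (by positivity)]
      linarith
    have hC : C = B * ((m : ℝ) - (i : ℝ)) / ((i : ℝ) + 2) := by
      rw [eq_div_iff (by positivity)]
      nlinarith [r2]
    have hD : D = C * ((m : ℝ) - (i : ℝ) - 1) / ((i : ℝ) + 3) := by
      rw [eq_div_iff (by positivity)]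
      nlinarith [r3]
    rw [hD, hC, hB]
    field_simp
    ring
end

section
/- For every integer n ≥ 2, let 𝒩̃_n(x) = Σ_{j=0}^{n−1} ((3n−2j)/(n+2)) c_{n,j+1} x^j be the Christoffel-type transform of the reduced Narayana polynomial, i.e. the polynomial satisfying (x−1)𝒩̃_n(x) = 𝒩_{n+1}(x) − (𝒩_{n+1}(1)/𝒩_n(1))𝒩_n(x). Then 𝒩̃_n has n−1 real simple zeros, and they alternate with the zeros of 𝒩_n: writing z_1 < ⋯ < z_{n−1} for the zeros of 𝒩̃_n and x_1 < ⋯ < x_{n−1} for the zeros of 𝒩_n, one has z_1 < x_1 < z_2 < x_2 < ⋯ < z_{n−1} < x_{n−1}, i.e. 𝒩̃_n ≺ 𝒩_n. -/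
open Polynomial

/-- The Christoffel-type transform of the reduced Narayana polynomial:
`𝒩̃_n(x) = Σ_{j=0}^{n−1} ((3n−2j)/(n+2)) c_{n,j+1} x^j`. -/
noncomputable def redNarayanaCT (n : ℕ) : Polynomial ℝ :=
  ∑ j ∈ Finset.range n,
    Polynomial.C ((3 * (n : ℝ) - 2 * (j : ℝ)) / ((n : ℝ) + 2) * narayanaNum n (j + 1)) *
      Polynomial.X ^ j


open Finset Filter Asymptotics Lagrange

/-!
At a zero `x_k` of `𝒩_n` the identity `(n + 2) 𝒩̃_n = 3n 𝒩_n - 2x 𝒩_n'` gives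
`(n + 2) 𝒩̃_n(x_k) = -2 x_k 𝒩_n'(x_k)`. The zeros of `𝒩_n` are negative (its coefficients are
positive) and simple, so `𝒩̃_n(x_k)` has the sign `(-1)^(n-2-k)` of `𝒩_n'(x_k)`. Hence the monic
`𝒩̃_n` changes sign on `(-∞, x_0)` and on every `(x_{k-1}, x_k)`: these `n - 1` zeros are all of
its zeros.
-/

lemma eq_nodal_of_isRoot {K ι : Type*} [Field K] {p : K[X]} {s : Finset ι} {v : ι → K}
    (hp : p.Monic) (hdeg : p.natDegree = #s) (hv : Set.InjOn v s)
    (hroot : ∀ i ∈ s, p.IsRoot (v i)) : p = nodal s v :=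
  eq_of_degree_le_of_eval_index_eq s hv (by rw [degree_eq_natDegree hp.ne_zero, hdeg])
    (by rw [degree_nodal, degree_eq_natDegree hp.ne_zero, hdeg])
    (by rw [hp.leadingCoeff, nodal_monic.leadingCoeff])
    fun i hi => by rw [(hroot i hi).eq_zero, eval_nodal_at_node hi]

lemma neg_one_pow_mul_eval_derivative_nodal_pos {m k : ℕ} {x : ℕ → ℝ}
    (hx : StrictMonoOn x (Set.Iio m)) (hk : k < m) :
    0 < (-1) ^ (m - 1 - k) * (derivative (nodal (range m) x)).eval (x k) := by
  rw [eval_nodal_derivative_eval_node_eq (mem_range.2 hk), eval_nodal]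
  have hsplit : (range m).erase k = range k ∪ Ioo k m := by
    ext i; simp only [mem_erase, mem_range, mem_union, mem_Ioo]; omega
  have hdisj : Disjoint (range k) (Ioo k m) :=
    disjoint_left.2 fun i hi hi' => by simp only [mem_range, mem_Ioo] at hi hi'; omega
  have hcard : #(Ioo k m) = m - 1 - k := by simp only [Nat.card_Ioo]; omega
  have hleft : 0 < ∏ i ∈ range k, (x k - x i) :=
    prod_pos fun i hi => sub_pos.2 <|
      hx (Set.mem_Iio.2 ((mem_range.1 hi).trans hk)) (Set.mem_Iio.2 hk) (mem_range.1 hi)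
  have hright : 0 < ∏ i ∈ Ioo k m, (x i - x k) :=
    prod_pos fun i hi => by
      simp only [mem_Ioo] at hi
      exact sub_pos.2 <| hx (Set.mem_Iio.2 hk) (Set.mem_Iio.2 hi.2) hi.1
  have hflip :
      ∏ i ∈ Ioo k m, (x k - x i) = (-1) ^ (m - 1 - k) * ∏ i ∈ Ioo k m, (x i - x k) := by
    rw [← hcard, ← prod_neg]; simp
  rw [hsplit, prod_union hdisj, hflip]
  calc (0 : ℝ) < (∏ i ∈ range k, (x k - x i)) * ∏ i ∈ Ioo k m, (x i - x k) := mul_pos hleft hright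
    _ = ((-1) ^ (m - 1 - k) * (-1) ^ (m - 1 - k)) *
          ((∏ i ∈ range k, (x k - x i)) * ∏ i ∈ Ioo k m, (x i - x k)) := by
      rw [← pow_add, ← two_mul, pow_mul]; simp
    _ = _ := by ring

lemma exists_isRoot_mem_Ioo_of_eval_mul_neg {f : ℝ[X]} {a b : ℝ} (hab : a ≤ b)
    (h : f.eval a * f.eval b < 0) : ∃ c ∈ Set.Ioo a b, f.IsRoot c := by
  have h0 : (0 : ℝ) ∈ Set.uIcc (f.eval a) (f.eval b) := by
    rcases mul_neg_iff.1 h with h | h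
    · exact Set.mem_uIcc.2 (Or.inr ⟨h.2.le, h.1.le⟩)
    · exact Set.mem_uIcc.2 (Or.inl ⟨h.1.le, h.2.le⟩)
  obtain ⟨c, hc, hfc⟩ := intermediate_value_uIcc f.continuous.continuousOn h0
  rw [Set.uIcc_of_le hab] at hc
  refine ⟨c, ⟨hc.1.lt_of_ne ?_, hc.2.lt_of_ne ?_⟩, hfc⟩ <;> rintro rfl <;> simp_all

lemma exists_lt_neg_one_pow_natDegree_mul_eval_pos {f : ℝ[X]} (hf : f.Monic)
    (hdeg : 0 < f.natDegree) (a : ℝ) : ∃ t < a, 0 < (-1) ^ f.natDegree * f.eval t := by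
  have hlead : (fun t : ℝ => (-1) ^ f.natDegree * f.eval t) ~[atBot]
      fun t => (-1) ^ f.natDegree * (f.leadingCoeff * t ^ f.natDegree) :=
    IsEquivalent.refl.mul f.isEquivalent_atBot_lead
  have hlim : Tendsto (fun t : ℝ => (-1) ^ f.natDegree * f.eval t) atBot atTop := by
    refine hlead.symm.tendsto_atTop ?_
    simp only [hf.leadingCoeff, one_mul, ← mul_pow, neg_one_mul]
    exact (tendsto_pow_atTop hdeg.ne').comp tendsto_neg_atBot_atTop
  obtain ⟨t, hpos, hlt⟩ := ((hlim.eventually_gt_atTop 0).and (eventually_lt_atBot a)).exists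
  exact ⟨t, hlt, hpos⟩

lemma mul_neg_of_neg_one_pow_mul_pos {a b : ℝ} (j : ℕ) (ha : 0 < (-1) ^ (j + 1) * a)
    (hb : 0 < (-1) ^ j * b) : a * b < 0 := by
  rcases neg_one_pow_eq_or ℝ j with h | h <;> simp only [pow_succ, h] at ha hb <;> nlinarith

section Interlacing

variable {f : ℝ[X]} {m : ℕ} {x : ℕ → ℝ}

lemma exists_isRoot_interlacing (hf : f.Monic) (hdeg : f.natDegree = m)
    (hx : StrictMonoOn x (Set.Iio m)) (hsign : ∀ k < m, 0 < (-1) ^ (m - 1 - k) * f.eval (x k))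
    {k : ℕ} (hk : k < m) : ∃ c, f.IsRoot c ∧ c < x k ∧ (0 < k → x (k - 1) < c) := by
  cases k with
  | zero =>
    obtain ⟨t, ht, hpos⟩ := exists_lt_neg_one_pow_natDegree_mul_eval_pos hf (hdeg ▸ hk) (x 0)
    rw [hdeg, show m = m - 1 - 0 + 1 by omega] at hpos
    obtain ⟨c, hc, hroot⟩ := exists_isRoot_mem_Ioo_of_eval_mul_neg ht.le
      (mul_neg_of_neg_one_pow_mul_pos _ hpos (hsign 0 hk))
    exact ⟨c, hroot, hc.2, fun h => absurd h (lt_irrefl 0)⟩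
  | succ j =>
    have hleft := hsign j (by omega)
    rw [show m - 1 - j = m - 1 - (j + 1) + 1 by omega] at hleft
    obtain ⟨c, hc, hroot⟩ := exists_isRoot_mem_Ioo_of_eval_mul_neg
      (hx.monotoneOn (Set.mem_Iio.2 (by omega)) (Set.mem_Iio.2 hk) (Nat.le_succ j))
      (mul_neg_of_neg_one_pow_mul_pos _ hleft (hsign (j + 1) hk))
    exact ⟨c, hroot, hc.2, fun _ => hc.1⟩

theorem exists_roots_interlacing (hf : f.Monic) (hdeg : f.natDegree = m)
    (hx : StrictMonoOn x (Set.Iio m)) (hsign : ∀ k < m, 0 < (-1) ^ (m - 1 - k) * f.eval (x k)) :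
    ∃ z : ℕ → ℝ, StrictMonoOn z (Set.Iio m) ∧ (∀ r, f.IsRoot r ↔ ∃ i < m, z i = r) ∧
      (∀ i < m, z i < x i) ∧ ∀ i, i + 1 < m → x i < z (i + 1) := by
  have H : ∀ k, ∃ c, k < m → f.IsRoot c ∧ c < x k ∧ (0 < k → x (k - 1) < c) := by
    intro k
    by_cases hk : k < m
    · obtain ⟨c, hc⟩ := exists_isRoot_interlacing hf hdeg hx hsign hk
      exact ⟨c, fun _ => hc⟩
    · exact ⟨0, fun h => absurd h hk⟩
  choose z hz using H
  have hzmono : StrictMonoOn z (Set.Iio m) := by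
    intro i hi j hj hij
    calc z i < x i := (hz i hi).2.1
      _ ≤ x (j - 1) := hx.monotoneOn hi (Set.mem_Iio.2 (by simp at hj; omega)) (by omega)
      _ < z j := (hz j hj).2.2 (by omega)
  have hfz : f = nodal (range m) z :=
    eq_nodal_of_isRoot hf (by rw [hdeg, card_range]) (by rw [coe_range]; exact hzmono.injOn)
      fun i hi => (hz i (mem_range.1 hi)).1
  refine ⟨z, hzmono, fun r => ?_, fun i hi => (hz i hi).2.1,
    fun i hi => (hz (i + 1) hi).2.2 i.succ_pos⟩
  rw [hfz, IsRoot.def, eval_nodal, prod_eq_zero_iff]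
  simp [sub_eq_zero, eq_comm]

end Interlacing

lemma coeff_sum_range_C_mul_X_pow {R : Type*} [Semiring R] (a : ℕ → R) (n j : ℕ) :
    (∑ i ∈ range n, C (a i) * X ^ i).coeff j = if j < n then a j else 0 := by
  simp only [finsetSum_coeff, coeff_C_mul_X_pow]
  rw [sum_ite_eq, if_congr mem_range rfl rfl]

lemma natDegree_sum_range_C_mul_X_pow_le {R : Type*} [Semiring R] (a : ℕ → R) (n : ℕ) :
    (∑ i ∈ range n, C (a i) * X ^ i).natDegree ≤ n - 1 :=
  natDegree_le_iff_coeff_eq_zero.2 fun j hj => by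
    rw [coeff_sum_range_C_mul_X_pow, if_neg (by omega)]

lemma narayanaNum_pos {n k : ℕ} (hk : 1 ≤ k) (hkn : k ≤ n) : 0 < narayanaNum n k := by
  have := Nat.choose_pos hkn
  have := Nat.choose_pos ((Nat.sub_le k 1).trans hkn)
  unfold narayanaNum
  have : 0 < n := by omega
  positivity

lemma narayanaNum_self {n : ℕ} (hn : 0 < n) : narayanaNum n n = 1 := by
  have : (n : ℝ) ≠ 0 := by positivity
  rw [narayanaNum, Nat.choose_self, Nat.choose_symm_of_eq_add (by omega : n = n - 1 + 1),
    Nat.choose_one_right]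
  field_simp
  norm_num

lemma redNarayana_coeff_sub_one {n : ℕ} (hn : 0 < n) : (redNarayana n).coeff (n - 1) = 1 := by
  rw [redNarayana, coeff_sum_range_C_mul_X_pow, if_pos (by omega), Nat.sub_add_cancel hn,
    narayanaNum_self hn]

lemma redNarayanaCT_coeff_sub_one {n : ℕ} (hn : 0 < n) :
    (redNarayanaCT n).coeff (n - 1) = 1 := by
  rw [redNarayanaCT, coeff_sum_range_C_mul_X_pow, if_pos (by omega), Nat.sub_add_cancel hn,
    narayanaNum_self hn, Nat.cast_pred hn]
  field_simp
  ring

lemma redNarayana_monic {n : ℕ} (hn : 0 < n) : (redNarayana n).Monic :=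
  monic_of_natDegree_le_of_coeff_eq_one _ (natDegree_sum_range_C_mul_X_pow_le _ n)
    (redNarayana_coeff_sub_one hn)

lemma redNarayana_natDegree {n : ℕ} (hn : 0 < n) : (redNarayana n).natDegree = n - 1 :=
  natDegree_eq_of_le_of_coeff_ne_zero (natDegree_sum_range_C_mul_X_pow_le _ n)
    (by rw [redNarayana_coeff_sub_one hn]; exact one_ne_zero)

lemma redNarayanaCT_monic {n : ℕ} (hn : 0 < n) : (redNarayanaCT n).Monic :=
  monic_of_natDegree_le_of_coeff_eq_one _ (natDegree_sum_range_C_mul_X_pow_le _ n)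
    (redNarayanaCT_coeff_sub_one hn)

lemma redNarayanaCT_natDegree {n : ℕ} (hn : 0 < n) : (redNarayanaCT n).natDegree = n - 1 :=
  natDegree_eq_of_le_of_coeff_ne_zero (natDegree_sum_range_C_mul_X_pow_le _ n)
    (by rw [redNarayanaCT_coeff_sub_one hn]; exact one_ne_zero)

lemma C_mul_redNarayanaCT (n : ℕ) :
    C ((n : ℝ) + 2) * redNarayanaCT n =
      C (3 * (n : ℝ)) * redNarayana n - 2 * (X * derivative (redNarayana n)) := by
  ext j
  have hXder : (X * derivative (redNarayana n)).coeff j = j * (redNarayana n).coeff j := by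
    cases j with
    | zero => simp
    | succ i => rw [coeff_X_mul, coeff_derivative, Nat.cast_succ, mul_comm]
  rw [coeff_C_mul, coeff_sub, coeff_C_mul, coeff_ofNat_mul, hXder, redNarayanaCT, redNarayana,
    coeff_sum_range_C_mul_X_pow, coeff_sum_range_C_mul_X_pow]
  split_ifs
  · field_simp
  · ring

lemma redNarayana_eval_pos {n : ℕ} (hn : 0 < n) {r : ℝ} (hr : 0 ≤ r) :
    0 < (redNarayana n).eval r := by
  rw [redNarayana, eval_finsetSum]
  simp only [eval_mul, eval_C, eval_pow, eval_X]
  refine sum_pos' (fun j hj => ?_) ⟨0, mem_range.2 hn, by simpa using narayanaNum_pos le_rfl hn⟩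
  have := narayanaNum_pos (Nat.le_add_left 1 j) (mem_range.1 hj)
  positivity

lemma neg_one_pow_mul_eval_redNarayanaCT_pos {n k : ℕ} {x : ℕ → ℝ} (hn : 0 < n)
    (hx : StrictMonoOn x (Set.Iio (n - 1))) (hp : redNarayana n = nodal (range (n - 1)) x)
    (hk : k < n - 1) : 0 < (-1) ^ (n - 1 - 1 - k) * (redNarayanaCT n).eval (x k) := by
  have hroot : (redNarayana n).eval (x k) = 0 := by
    rw [hp]; exact eval_nodal_at_node (mem_range.2 hk)
  have hneg : x k < 0 := by
    by_contra! h
    exact (redNarayana_eval_pos hn h).ne' hroot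
  have hder := neg_one_pow_mul_eval_derivative_nodal_pos hx hk
  rw [← hp] at hder
  have hid := congrArg (eval (x k)) (C_mul_redNarayanaCT n)
  simp only [eval_mul, eval_C, eval_sub, eval_X, eval_ofNat, hroot, mul_zero, zero_sub] at hid
  have key : ((n : ℝ) + 2) * ((-1) ^ (n - 1 - 1 - k) * (redNarayanaCT n).eval (x k)) =
      2 * -x k * ((-1) ^ (n - 1 - 1 - k) * (derivative (redNarayana n)).eval (x k)) := by
    linear_combination (-1) ^ (n - 1 - 1 - k) * hid
  refine pos_of_mul_pos_right (key ▸ mul_pos (by linarith) hder) (by positivity)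

/-- Corollary on Narayana polynomials — the Christoffel-type transform
`𝒩̃_n` has `n−1` real simple zeros which alternate with the zeros
`x 0 < … < x (n-2)` of `𝒩_n`: namely `𝒩̃_n ≺ 𝒩_n`. -/
theorem stmt_13 (n : ℕ) (hn : 2 ≤ n)
    (x : ℕ → ℝ)
    (hx : ∀ i j : ℕ, i < j → j < n - 1 → x i < x j)
    (hxroots : ∀ r : ℝ, (redNarayana n).eval r = 0 ↔ ∃ i < n - 1, x i = r) :
    ∃ z : ℕ → ℝ, (∀ i j : ℕ, i < j → j < n - 1 → z i < z j) ∧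
      (∀ r : ℝ, (redNarayanaCT n).eval r = 0 ↔ ∃ i < n - 1, z i = r) ∧
      (∀ i < n - 1, z i < x i) ∧ (∀ i : ℕ, i + 1 < n - 1 → x i < z (i + 1)) := by
  have hpos : 0 < n := by omega
  have hxmono : StrictMonoOn x (Set.Iio (n - 1)) := fun i _ j hj hij => hx i j hij hj
  have hp : redNarayana n = nodal (range (n - 1)) x :=
    eq_nodal_of_isRoot (redNarayana_monic hpos) (by rw [redNarayana_natDegree hpos, card_range])
      (by rw [coe_range]; exact hxmono.injOn) fun i hi => (hxroots _).2 ⟨i, mem_range.1 hi, rfl⟩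
  obtain ⟨z, hz, hzroots, hzx, hxz⟩ := exists_roots_interlacing (redNarayanaCT_monic hpos)
    (redNarayanaCT_natDegree hpos) hxmono fun k hk =>
      neg_one_pow_mul_eval_redNarayanaCT_pos hpos hxmono hp hk
  exact ⟨z, fun i j hij hj => hz (hij.trans hj) hj hij, hzroots, hzx, hxz⟩
end

section
/- For every integer n ≥ 2, the polynomial identity n·𝒩_n(x) = 𝒫_n(x) + (n−1)(1+x)·𝒩_{n−1}(x) holds, where 𝒫_n(x) = Σ_{j=0}^{n−1} d_{n,j} x^j with d_{n,j} = C(n−1,j)^2 + C(n−1,j+1)·C(n−1,j−1) (binomial coefficients with out-of-range entries equal to 0). -/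
/-!
Write `n = m + 1`. Then `n·𝒩_n = Σ_j C(n,j+1) C(n,j) x^j`, and expanding both factors by Pascal's
rule gives four products: `C(m,j)² + C(m,j+1) C(m,j−1)` is `d_{n,j}`, while
`C(m,j+1) C(m,j) + C(m,j) C(m,j−1)` is the coefficient of `x^j` in `(1+x)·(m·𝒩_m)`.
-/

open Polynomial

/-- The coefficients `d_{n,j} = C(n−1,j)² + C(n−1,j+1)·C(n−1,j−1)`, with out-of-range
binomial entries equal to `0` (in particular the `j−1` entry vanishes for `j = 0`). -/
noncomputable def narayanaD (n j : ℕ) : ℝ :=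
  ((n - 1).choose j : ℝ) ^ 2 +
    ((n - 1).choose (j + 1) : ℝ) * (if j = 0 then 0 else ((n - 1).choose (j - 1) : ℝ))

/-- The polynomial `𝒫_n(x) = Σ_{j=0}^{n−1} d_{n,j} x^j`. -/
noncomputable def narayanaP (n : ℕ) : Polynomial ℝ :=
  ∑ j ∈ Finset.range n, Polynomial.C (narayanaD n j) * Polynomial.X ^ j

lemma coeff_redNarayana (n k : ℕ) :
    (redNarayana n).coeff k = if k < n then narayanaNum n (k + 1) else 0 := by
  simp [redNarayana, finsetSum_coeff, coeff_X_pow]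

lemma coeff_natCast_mul_redNarayana (n k : ℕ) :
    (C (n : ℝ) * redNarayana n).coeff k = n.choose (k + 1) * n.choose k := by
  rw [coeff_C_mul, coeff_redNarayana]
  split_ifs with hk
  · have hn : (n : ℝ) ≠ 0 := Nat.cast_ne_zero.mpr (by omega)
    simp only [narayanaNum, Nat.add_sub_cancel]
    field_simp
  · simp [Nat.choose_eq_zero_of_lt (show n < k + 1 by omega)]

lemma coeff_narayanaP_succ (m k : ℕ) : (narayanaP (m + 1)).coeff k = narayanaD (m + 1) k := by
  simp only [narayanaP, finsetSum_coeff, coeff_C_mul, coeff_X_pow, mul_ite, mul_one, mul_zero,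
    Finset.sum_ite_eq, Finset.mem_range]
  split_ifs with hk
  · rfl
  · simp [narayanaD, Nat.choose_eq_zero_of_lt (show m < k by omega),
      Nat.choose_eq_zero_of_lt (show m < k + 1 by omega)]

lemma coeff_one_add_X_mul_succ {R : Type*} [Semiring R] (p : R[X]) (k : ℕ) :
    ((1 + X) * p).coeff (k + 1) = p.coeff (k + 1) + p.coeff k := by
  rw [add_mul, one_mul, coeff_add, coeff_X_mul]

theorem stmt_14_general (n : ℕ) :
    Polynomial.C (n : ℝ) * redNarayana n
      = narayanaP n +
        Polynomial.C ((n : ℝ) - 1) * (1 + Polynomial.X) * redNarayana (n - 1) := by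
  rcases n with _ | m
  · simp [redNarayana, narayanaP]
  have hm : ((m + 1 : ℕ) : ℝ) - 1 = m := by push_cast; ring
  rw [hm, Nat.add_sub_cancel, mul_assoc, mul_left_comm (C (m : ℝ))]
  ext k
  rw [coeff_add, coeff_natCast_mul_redNarayana, coeff_narayanaP_succ, narayanaD,
    Nat.add_sub_cancel]
  rcases k with _ | k
  · rw [add_mul, one_mul, coeff_add, coeff_X_mul_zero, add_zero, coeff_natCast_mul_redNarayana]
    simp [add_comm]
  · rw [coeff_one_add_X_mul_succ, coeff_natCast_mul_redNarayana, coeff_natCast_mul_redNarayana,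
      if_neg k.succ_ne_zero, Nat.add_sub_cancel]
    simp only [Nat.choose_succ_succ' m (k + 1), Nat.choose_succ_succ' m k]
    push_cast
    ring

/-- the identity `n·𝒩_n(x) = 𝒫_n(x) + (n−1)(1+x)·𝒩_{n−1}(x)` for `n ≥ 2`. -/
theorem stmt_14 (n : ℕ) (hn : 2 ≤ n) :
    Polynomial.C (n : ℝ) * redNarayana n
      = narayanaP n +
        Polynomial.C ((n : ℝ) - 1) * (1 + Polynomial.X) * redNarayana (n - 1) :=
  stmt_14_general n
end
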